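/- arXiv:1706.04396 — 3 statements merged into one kernel-verified Lean document; each statement's English description precedes it below -/
import Mathlib

section
/- For any Souslin set 𝓔 in the Effros Borel space (F(T), 𝓑_{F(T)}) that contains 𝓓, some element of 𝓔 intersects L. -/
open Set Topology TopologicalSpace MeasureTheory

/-- The Effros Borel structure on the collection of closed subsets of `X`. -/
def effrosSigma (X : Type*) [TopologicalSpace X] :
    MeasurableSpace {A : Set X // IsClosed A} :=
  MeasurableSpace.generateFrom
    {𝓤 : Set {A : Set X // IsClosed A} |
      ∃ U : Set X, IsOpen U ∧ 𝓤 = {A : {A : Set X // IsClosed A} | ((A : Set X) ∩ U).Nonempty}}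

/-- `𝓐` is the result of the Souslin operation applied to `m`-measurable sets. -/
def IsSouslinIn {α : Type*} (m : MeasurableSpace α) (𝓐 : Set α) : Prop :=
  ∃ f : List ℕ → Set α, (∀ s, MeasurableSet[m] (f s)) ∧
    𝓐 = ⋃ σ : ℕ → ℕ, ⋂ n : ℕ, f (List.ofFn fun i : Fin n => σ i)

/-- dim X ≤ 0 : `X` has a base consisting of clopen sets (or is empty). -/
def ZeroDimensional (X : Type*) [TopologicalSpace X] : Prop :=
  ∃ B : Set (Set X), (∀ s ∈ B, IsClopen s) ∧ IsTopologicalBasis B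

/-- Every point of `S` is isolated in the subspace `S`. -/
def RelativelyDiscrete {E : Type*} [TopologicalSpace E] (S : Set E) : Prop :=
  ∀ x ∈ S, ∃ U : Set E, IsOpen U ∧ U ∩ S = {x}

/-- countable union of zero-dimensional subspaces -/
def CountableDimensional (X : Type*) [TopologicalSpace X] : Prop :=
  ∃ C : ℕ → Set X, (⋃ n, C n) = univ ∧ ∀ n, ZeroDimensional (C n)

/-- F₀(X): nonempty zero-dimensional closed sets -/
def zeroDimClosedSets (X : Type*) [TopologicalSpace X] :
    Set {A : Set X // IsClosed A} :=
  {A | (A : Set X).Nonempty ∧ ZeroDimensional (A : Set X)}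

/-- The Vietoris topology on the collection of closed subsets of `X`. -/
def vietoris (X : Type*) [TopologicalSpace X] :
    TopologicalSpace {A : Set X // IsClosed A} :=
  TopologicalSpace.generateFrom
    ({𝓤 | ∃ U : Set X, IsOpen U ∧ 𝓤 = {A : {A : Set X // IsClosed A} | (A : Set X) ⊆ U}} ∪
     {𝓤 | ∃ U : Set X, IsOpen U ∧
        𝓤 = {A : {A : Set X // IsClosed A} | ((A : Set X) ∩ U).Nonempty}})

/-- The Wijsman topology on nonempty closed subsets of a metric space. -/
noncomputable def wijsman (E : Type*) [MetricSpace E] :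
    TopologicalSpace {A : Set E // IsClosed A ∧ A.Nonempty} :=
  ⨅ z : E, TopologicalSpace.induced (fun A => Metric.infDist z (A : Set E)) inferInstance

/-- The relatively discrete part `D` of the space `T = L ∪ D`:
the points `(qₙ, 1/m)` for `m ≥ n`, where `q` enumerates the rationals of `[0,1]`. -/
def Dset (q : ℕ+ → ℝ) : Set (ℝ × ℝ) :=
  {p | ∃ n m : ℕ+, n ≤ m ∧ p = (q n, 1 / (m : ℝ))}

/-- `L = (I \ ℚ) × {0}`. -/
def Lset : Set (ℝ × ℝ) :=
  {p | p.1 ∈ Icc (0:ℝ) 1 ∧ Irrational p.1 ∧ p.2 = 0}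

/-- `T = L ∪ D`, a subspace of the plane. -/
def Tset (q : ℕ+ → ℝ) : Set (ℝ × ℝ) := Lset ∪ Dset q

/-
If no member of `𝓔` met `L`, the codes of well-founded trees would form a Souslin set, which a
diagonal argument forbids.

A point `x` of the Cantor space codes the closed subset of `(ℕ → Bool) × (ℕ → ℕ)` left after
removing the basic rectangles that `x` selects, and `codedTree x x` is the tree on `ℕ` whose
branches are the `z` with `(x, z)` in the set coded by `x`. Diagonalizing,
`{x | ¬ HasBranch (codedTree x x)}` is not analytic, hence not Souslin.

A word `s` is sent to a point `(a_s, 1 / m_s)` of `D`, where `a_s` is the left endpoint of a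
rational interval: the intervals are nested along words, the `i`-th child of an interval lies in
its first `(i + 1)`-th part, and the children at depth `d` avoid `q 1, …, q (d + 1)`. Along a
branch the endpoints converge to an irrational, so the closure of the image of a tree with a
branch meets `L`. Conversely, nodes whose points converge to a point of `L` eventually avoid each
node, and their endpoints converge to an irrational; as the endpoints in the `i`-th subtree of
`w` converge to the rational `a_w` when `i → ∞`, König's lemma yields a branch. Finally, `x` ↦
the closure of the image of `codedTree x x` is Effros measurable, and the well-founded codes are
the preimage of `𝓔` under it.
-/

open Filter

namespace List

def initSeg {α : Type*} (z : ℕ → α) (n : ℕ) : List α := ofFn fun i : Fin n => z i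

variable {α : Type*}

@[simp] theorem length_initSeg (z : ℕ → α) (n : ℕ) : (initSeg z n).length = n := length_ofFn

@[simp] theorem initSeg_zero (z : ℕ → α) : initSeg z 0 = [] := rfl

theorem initSeg_succ (z : ℕ → α) (n : ℕ) : initSeg z (n + 1) = initSeg z n ++ [z n] := by
  rw [initSeg, ofFn_succ', concat_eq_append]; rfl

theorem initSeg_prefix_initSeg (z : ℕ → α) {m n : ℕ} (h : m ≤ n) :
    initSeg z m <+: initSeg z n := by
  induction n, h using Nat.le_induction with
  | base => exact prefix_refl _
  | succ n _ ih => exact ih.trans (initSeg_succ z n ▸ prefix_append _ _)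

theorem exists_prefix_initSeg_iff {t : List α} {z : ℕ → α} :
    (∃ n, t <+: initSeg z n) ↔ initSeg z t.length = t := by
  refine ⟨fun ⟨n, h⟩ => ?_, fun h => ⟨t.length, h.symm ▸ prefix_refl t⟩⟩
  have hlen : t.length ≤ n := by simpa using h.length_le
  exact (prefix_of_prefix_length_le (initSeg_prefix_initSeg z hlen) h (by simp)).eq_of_length
    (by simp)

def HasBranch (S : Set (List α)) : Prop := ∃ z : ℕ → α, ∀ n, initSeg z n ∈ S

theorem hasBranch_of_forall_exists_append {P : List α → Prop} (h₀ : P [])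
    (hP : ∀ w, P w → ∃ a, P (w ++ [a])) : HasBranch {w | P w} := by
  choose next hnext using hP
  let W : ℕ → {w // P w} := fun n =>
    Nat.rec ⟨[], h₀⟩ (fun _ w => ⟨w.1 ++ [next w.1 w.2], hnext _ _⟩) n
  refine ⟨fun n => next (W n).1 (W n).2, fun n => ?_⟩
  have : initSeg (fun n => next (W n).1 (W n).2) n = (W n).1 := by
    induction n with
    | zero => rfl
    | succ n ih => rw [initSeg_succ, ih]
  exact this ▸ (W n).2

def prefixCylinder (t : List α) : Set (ℕ → α) := {z | initSeg z t.length = t}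

theorem prefixCylinder_initSeg (z : ℕ → α) (n : ℕ) :
    prefixCylinder (initSeg z n) = PiNat.cylinder z n := by
  ext y
  simp only [prefixCylinder, length_initSeg, mem_ofPred_eq]
  simp only [initSeg, ofFn_inj, funext_iff, Fin.forall_iff, PiNat.mem_cylinder_iff]

variable [TopologicalSpace α] [DiscreteTopology α]

theorem isOpen_setOf_initSeg_eq (n : ℕ) (t : List α) :
    IsOpen {z : ℕ → α | initSeg z n = t} :=
  (continuous_pi fun i : Fin n => continuous_apply (i : ℕ) :
    Continuous fun (z : ℕ → α) (i : Fin n) => z i).isOpen_preimage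
    {g : Fin n → α | ofFn g = t} (isOpen_discrete _)

theorem isTopologicalBasis_range_prefixCylinder :
    IsTopologicalBasis (Set.range (prefixCylinder : List α → Set (ℕ → α))) := by
  refine isTopologicalBasis_of_isOpen_of_nhds
    (by rintro _ ⟨t, rfl⟩; exact isOpen_setOf_initSeg_eq _ _) fun z u hz hu => ?_
  obtain ⟨_, ⟨x, n, rfl⟩, hzx, hxu⟩ :=
    (PiNat.isTopologicalBasis_cylinders fun _ => α).exists_subset_of_mem_open hz hu
  rw [← PiNat.mem_cylinder_iff_eq.1 hzx] at hxu
  exact ⟨_, ⟨initSeg z n, rfl⟩, by simp [prefixCylinder_initSeg], by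
    rwa [prefixCylinder_initSeg]⟩

end List

open List (initSeg HasBranch prefixCylinder)

theorem IsSouslinIn.preimage {α β : Type*} {mα : MeasurableSpace α} {mβ : MeasurableSpace β}
    {f : α → β} (hf : Measurable f) {s : Set β} (hs : IsSouslinIn mβ s) :
    IsSouslinIn mα (f ⁻¹' s) := by
  obtain ⟨g, hg, rfl⟩ := hs
  exact ⟨fun t => f ⁻¹' g t, fun t => hf (hg t),
    by simp only [preimage_iUnion, preimage_iInter]⟩

theorem IsSouslinIn.analyticSet {X : Type*} [TopologicalSpace X] [PolishSpace X]
    [MeasurableSpace X] [BorelSpace X] {s : Set X} (hs : IsSouslinIn ‹_› s) :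
    AnalyticSet s := by
  obtain ⟨f, hf, rfl⟩ := hs
  let P : Set (X × (ℕ → ℕ)) := {p | ∀ n, p.1 ∈ f (initSeg p.2 n)}
  have hP : P = ⋂ n, ⋃ t, f t ×ˢ {z | initSeg z n = t} := by ext; simp [P]
  have hPm : MeasurableSet P := hP ▸ .iInter fun n => .iUnion fun t =>
    (hf t).prod (List.isOpen_setOf_initSeg_eq n t).measurableSet
  convert hPm.analyticSet.image_of_continuous continuous_fst
  ext x
  simp [P, initSeg]

theorem MeasureTheory.AnalyticSet.exists_isClosed_eq_image_fst {X : Type*} [TopologicalSpace X]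
    [T2Space X] {s : Set X} (hs : AnalyticSet s) :
    ∃ F : Set (X × (ℕ → ℕ)), IsClosed F ∧ s = Prod.fst '' F := by
  rw [AnalyticSet_def] at hs
  obtain rfl | ⟨f, hf, rfl⟩ := hs
  · exact ⟨∅, isClosed_empty, by simp⟩
  · refine ⟨{p | f p.2 = p.1}, isClosed_eq (hf.comp continuous_snd) continuous_fst, ?_⟩
    ext x
    simp

theorem not_analyticSet_diagonal {X : Type*} [TopologicalSpace X] [T2Space X]
    (C : X → Set (X × (ℕ → ℕ))) (hC : ∀ F, IsClosed F → ∃ x, C x = F) :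
    ¬ AnalyticSet {x | ∀ z, (x, z) ∉ C x} := by
  intro hs
  obtain ⟨F, hF, hsF⟩ := hs.exists_isClosed_eq_image_fst
  obtain ⟨y, rfl⟩ := hC F hF
  have hy : y ∈ {x | ∀ z, (x, z) ∉ C x} ↔ y ∈ Prod.fst '' C y := by rw [← hsF]
  simp only [mem_ofPred_eq, mem_image, Prod.exists, exists_and_right, exists_eq_right] at hy
  exact not_iff_self (not_exists.trans hy)

def codedClosed {Z : Type*} (b : ℕ → Set Z) (c : ℕ → Bool) : Set Z :=
  {p | ∀ k, c k = true → p ∉ b k}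

theorem TopologicalSpace.IsTopologicalBasis.exists_codedClosed_eq {Z : Type*} [TopologicalSpace Z]
    {b : ℕ → Set Z} (hb : IsTopologicalBasis (range b)) {F : Set Z} (hF : IsClosed F) :
    ∃ c, codedClosed b c = F := by
  classical
  refine ⟨fun k => decide (Disjoint (b k) F),
    Set.ext fun p => ⟨fun hp => ?_, fun hp k hk hpk => ?_⟩⟩
  · by_contra hpF
    obtain ⟨_, ⟨k, rfl⟩, hpk, hkF⟩ := hb.exists_subset_of_mem_open hpF hF.isOpen_compl
    exact hp k (decide_eq_true (subset_compl_iff_disjoint_right.1 hkF)) hpk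
  · exact disjoint_left.1 (of_decide_eq_true hk) hpk hp

noncomputable def wordPairs : ℕ → List Bool × List ℕ := (exists_surjective_nat _).choose

theorem wordPairs_surjective : Function.Surjective wordPairs :=
  (exists_surjective_nat _).choose_spec

def basicRect (k : ℕ) : Set ((ℕ → Bool) × (ℕ → ℕ)) :=
  prefixCylinder (wordPairs k).1 ×ˢ prefixCylinder (wordPairs k).2

theorem isTopologicalBasis_range_basicRect : IsTopologicalBasis (range basicRect) := by
  convert (List.isTopologicalBasis_range_prefixCylinder (α := Bool)).prod
    (List.isTopologicalBasis_range_prefixCylinder (α := ℕ)) using 1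
  ext U
  simp only [Set.mem_range, mem_image2, exists_exists_eq_and]
  constructor
  · rintro ⟨k, rfl⟩
    exact ⟨_, _, rfl⟩
  · rintro ⟨u, t, rfl⟩
    obtain ⟨k, hk⟩ := wordPairs_surjective (u, t)
    exact ⟨k, by rw [basicRect, hk]⟩

def codedTree (c y : ℕ → Bool) : Set (List ℕ) :=
  {s | ∀ k, c k = true → y ∈ prefixCylinder (wordPairs k).1 → ¬ (wordPairs k).2 <+: s}

theorem mem_codedTree_of_prefix {c y : ℕ → Bool} {w s : List ℕ} (hws : w <+: s)
    (hs : s ∈ codedTree c y) : w ∈ codedTree c y :=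
  fun k hk hy hw => hs k hk hy (hw.trans hws)

theorem hasBranch_codedTree_iff (c y : ℕ → Bool) :
    HasBranch (codedTree c y) ↔ ∃ z, (y, z) ∈ codedClosed basicRect c := by
  refine exists_congr fun z => ⟨fun h k hk ⟨hy, hz⟩ => ?_, fun h n k hk hy hz => ?_⟩
  · obtain ⟨n, hn⟩ := List.exists_prefix_initSeg_iff.2 hz
    exact h n k hk hy hn
  · exact h k hk ⟨hy, List.exists_prefix_initSeg_iff.1 ⟨n, hz⟩⟩

theorem measurableSet_setOf_mem_codedTree (s : List ℕ) :
    MeasurableSet {x : ℕ → Bool | s ∈ codedTree x x} :=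
  measurableSet_setOfPred.2 <| Measurable.forall fun k =>
    (measurableSet_setOfPred.1 (measurable_pi_apply k (measurableSet_singleton true))).imp <|
    (measurableSet_setOfPred.1 (List.isOpen_setOf_initSeg_eq _ _).measurableSet).imp
      measurable_const

theorem not_isSouslinIn_setOf_not_hasBranch_codedTree :
    ¬ IsSouslinIn MeasurableSpace.pi {x : ℕ → Bool | ¬ HasBranch (codedTree x x)} := by
  have : PolishSpace (ℕ → Bool) := {}
  refine fun h => not_analyticSet_diagonal (codedClosed basicRect)
    (fun F hF => isTopologicalBasis_range_basicRect.exists_codedClosed_eq hF) ?_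
  convert h.analyticSet using 2 with x
  simp [hasBranch_codedTree_iff]

theorem IsOpen.exists_rat_Icc_subset {U : Set ℝ} (hU : IsOpen U) (hne : U.Nonempty) :
    ∃ p : ℚ × ℚ, (p.1 : ℝ) < p.2 ∧ Icc (p.1 : ℝ) p.2 ⊆ U := by
  obtain ⟨y, hy⟩ := hne
  obtain ⟨ε, hε, hball⟩ := Metric.isOpen_iff.1 hU y hy
  obtain ⟨a, ha⟩ := exists_rat_btwn (show y - ε / 2 < y by linarith)
  obtain ⟨b, hb⟩ := exists_rat_btwn (show y < y + ε / 2 by linarith)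
  refine ⟨(a, b), ha.2.trans hb.1, fun x hx => hball ?_⟩
  rw [Metric.mem_ball, Real.dist_eq, abs_lt]
  constructor <;> linarith [hx.1, hx.2, ha.1, hb.2]

theorem exists_rat_Icc_subset_Ioo_diff {a b : ℝ} (hab : a < b) {F : Set ℝ} (hF : F.Finite) :
    ∃ p : ℚ × ℚ, (p.1 : ℝ) < p.2 ∧ Icc (p.1 : ℝ) p.2 ⊆ Ioo a b \ F :=
  (isOpen_Ioo.sdiff hF.isClosed).exists_rat_Icc_subset ((Ioo_infinite hab).sdiff hF).nonempty

section NestedIntervals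

variable (r : ℕ → ℝ)

theorem lt_add_div_succ {a b : ℝ} (h : a < b) (i : ℕ) : a < a + (b - a) / (i + 1) := by
  have : 0 < (b - a) / (i + 1) := by positivity
  linarith

noncomputable def subinterval (I : ℝ × ℝ) (d i : ℕ) : ℝ × ℝ :=
  if h : I.1 < I.2 then
    let p :=
      (exists_rat_Icc_subset_Ioo_diff (lt_add_div_succ h i) ((finite_Iic d).image r)).choose
    (p.1, p.2)
  else I

theorem subinterval_spec {I : ℝ × ℝ} (h : I.1 < I.2) (d i : ℕ) :
    (subinterval r I d i).1 < (subinterval r I d i).2 ∧ ¬ Irrational (subinterval r I d i).1 ∧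
      Icc (subinterval r I d i).1 (subinterval r I d i).2 ⊆
        Ioo I.1 (I.1 + (I.2 - I.1) / (i + 1)) \ r '' Iic d := by
  obtain ⟨h₁, h₂⟩ :=
    (exists_rat_Icc_subset_Ioo_diff (lt_add_div_succ h i) ((finite_Iic d).image r)).choose_spec
  simp only [subinterval, dif_pos h]
  exact ⟨h₁, Rat.not_irrational _, h₂⟩

noncomputable def nestedInterval (s : List ℕ) : ℝ × ℝ :=
  s.reverseRecOn (motive := fun _ => ℝ × ℝ) (0, 1) fun w i I => subinterval r I w.length i

@[simp] theorem nestedInterval_nil : nestedInterval r [] = (0, 1) := by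
  simp [nestedInterval]

theorem nestedInterval_append_singleton (s : List ℕ) (i : ℕ) :
    nestedInterval r (s ++ [i]) = subinterval r (nestedInterval r s) s.length i := by
  simp [nestedInterval]

theorem nestedInterval_fst_lt_snd (s : List ℕ) :
    (nestedInterval r s).1 < (nestedInterval r s).2 := by
  induction s using List.reverseRecOn with
  | nil => simp
  | append_singleton s i ih =>
    rw [nestedInterval_append_singleton]
    exact (subinterval_spec r ih _ _).1

theorem not_irrational_nestedInterval_fst (s : List ℕ) :
    ¬ Irrational (nestedInterval r s).1 := by
  induction s using List.reverseRecOn with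
  | nil => simp
  | append_singleton s i _ =>
    rw [nestedInterval_append_singleton]
    exact (subinterval_spec r (nestedInterval_fst_lt_snd r s) _ _).2.1

theorem Icc_nestedInterval_append_singleton_subset (s : List ℕ) (i : ℕ) :
    Icc (nestedInterval r (s ++ [i])).1 (nestedInterval r (s ++ [i])).2 ⊆
      Ioo (nestedInterval r s).1
        ((nestedInterval r s).1 + ((nestedInterval r s).2 - (nestedInterval r s).1) / (i + 1)) \
        r '' Iic s.length := by
  rw [nestedInterval_append_singleton]
  exact (subinterval_spec r (nestedInterval_fst_lt_snd r s) _ _).2.2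

theorem Icc_nestedInterval_antitone {w s : List ℕ} (h : w <+: s) :
    Icc (nestedInterval r s).1 (nestedInterval r s).2 ⊆
      Icc (nestedInterval r w).1 (nestedInterval r w).2 := by
  obtain ⟨t, rfl⟩ := h
  induction t using List.reverseRecOn with
  | nil => simp
  | append_singleton t i ih =>
    rw [← List.append_assoc]
    refine (Icc_nestedInterval_append_singleton_subset r _ i).trans
      (sdiff_subset.trans (Ioo_subset_Icc_self.trans ((Icc_subset_Icc_right ?_).trans ih)))
    have hlt := nestedInterval_fst_lt_snd r (w ++ t)
    have : (_ - _) / ((i : ℝ) + 1) ≤ _ := div_le_self (sub_nonneg.2 hlt.le) (by simp)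
    linarith

theorem nestedInterval_fst_mem_Ioo (w : List ℕ) (i : ℕ) (rest : List ℕ) :
    (nestedInterval r (w ++ i :: rest)).1 ∈
      Ioo (nestedInterval r w).1
        ((nestedInterval r w).1 + ((nestedInterval r w).2 - (nestedInterval r w).1) / (i + 1)) :=
  (Icc_nestedInterval_append_singleton_subset r w i
    (Icc_nestedInterval_antitone r (by simp : w ++ [i] <+: w ++ i :: rest)
      (left_mem_Icc.2 (nestedInterval_fst_lt_snd r _).le))).1

theorem eventually_nestedInterval_fst_mem (w : List ℕ) :
    ∀ U ∈ 𝓝 (nestedInterval r w).1,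
      ∀ᶠ i in atTop, ∀ rest, (nestedInterval r (w ++ i :: rest)).1 ∈ U := by
  intro U hU
  obtain ⟨l, u, ⟨hl, hu⟩, hsub⟩ := mem_nhds_iff_exists_Ioo_subset.1 hU
  set I := nestedInterval r w
  have hlim : Tendsto (fun i : ℕ => I.1 + (I.2 - I.1) / (i + 1)) atTop (𝓝 I.1) := by
    simpa [div_eq_mul_inv] using
      tendsto_const_nhds.add (tendsto_one_div_add_atTop_nhds_zero_nat.const_mul (I.2 - I.1))
  filter_upwards [hlim.eventually (gt_mem_nhds hu)] with i hi rest
  have := nestedInterval_fst_mem_Ioo r w i rest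
  exact hsub ⟨hl.trans this.1, this.2.trans hi⟩

theorem exists_tendsto_nestedInterval_fst (z : ℕ → ℕ) :
    ∃ x ∈ Icc (0 : ℝ) 1, x ∉ range r ∧
      Tendsto (fun n => (nestedInterval r (initSeg z n)).1) atTop (𝓝 x) := by
  set f := fun n => (nestedInterval r (initSeg z n)).1
  set g := fun n => (nestedInterval r (initSeg z n)).2
  have hanti : Antitone fun n => Icc (f n) (g n) :=
    fun m n h => Icc_nestedInterval_antitone r (List.initSeg_prefix_initSeg z h)
  have hfg : ∀ n, f n ≤ g n := fun n => (nestedInterval_fst_lt_snd r _).le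
  have hx := mem_iInter.1 (ciSup_mem_iInter_Icc_of_antitone_Icc hanti hfg)
  have hmono : Monotone f := fun m n h => ((Icc_subset_Icc_iff (hfg n)).1 (hanti h)).1
  refine ⟨⨆ n, f n, by simpa [f, g] using hx 0, ?_, tendsto_atTop_ciSup hmono ⟨g 0, ?_⟩⟩
  · rintro ⟨j, hj⟩
    have hxj := hx (j + 1)
    simp only [f, g, List.initSeg_succ] at hxj
    have := Icc_nestedInterval_append_singleton_subset r (initSeg z j) (z j) hxj
    exact this.2 ⟨j, by simp, hj⟩
  · rintro _ ⟨n, rfl⟩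
    exact (hfg n).trans ((Icc_subset_Icc_iff (hfg n)).1 (hanti (Nat.zero_le n))).2

end NestedIntervals

/-- König's lemma: the prefixes of infinitely many `s k` form a tree without leaves, since if no
child of `w` were a prefix of infinitely many `s k`, then `a (s k)` would accumulate at
`a w ≠ p`. -/
theorem List.hasBranch_of_tendsto {X : Type*} [TopologicalSpace X] [T2Space X]
    {S : Set (List ℕ)} (hS : ∀ ⦃w s⦄, w <+: s → s ∈ S → w ∈ S) {a : List ℕ → X}
    (ha : ∀ w, ∀ U ∈ 𝓝 (a w), ∀ᶠ i in atTop, ∀ rest, a (w ++ i :: rest) ∈ U)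
    {s : ℕ → List ℕ} (hsS : ∀ k, s k ∈ S) (hs : ∀ w, ∀ᶠ k in atTop, s k ≠ w)
    {p : X} (hp : p ∉ Set.range a) (hlim : Tendsto (a ∘ s) atTop (𝓝 p)) : HasBranch S := by
  suffices h : HasBranch {w | ∃ᶠ k in atTop, w <+: s k} by
    obtain ⟨z, hz⟩ := h
    exact ⟨z, fun n => let ⟨k, hk⟩ := (hz n).exists; hS hk (hsS k)⟩
  refine hasBranch_of_forall_exists_append (.of_forall fun k => nil_prefix) fun w hw => ?_
  by_contra! hno
  obtain ⟨U, V, hU, hV, hUV⟩ := t2_separation_nhds fun h : a w = p => hp ⟨w, h⟩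
  obtain ⟨B, hB⟩ := eventually_atTop.1 (ha w U hU)
  have hev : ∀ᶠ k in atTop,
      s k ≠ w ∧ (∀ i ∈ Finset.range B, ¬ w ++ [i] <+: s k) ∧ a (s k) ∈ V :=
    (hs w).and (((Finset.range B).eventually_all).2 (fun i _ => hno i) |>.and (hlim hV))
  obtain ⟨k, ⟨_ | ⟨i, rest⟩, hk⟩, hne, hsmall, hkV⟩ := (hw.and_eventually hev).exists
  · exact hne (by simpa using hk.symm)
  · rw [← hk] at hsmall hkV
    have hiB : B ≤ i := not_lt.1 fun hi => hsmall i (Finset.mem_range.2 hi) (by simp)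
    exact Set.disjoint_left.1 hUV (hB i hiB rest) hkV

section TreePoints

variable (q : ℕ+ → ℝ)

/-- `Function.invFun q` recovers the index `n` of the rational left endpoint `q n` of the
interval of `s`, so this is the point `(q n, 1 / m)` of `D` with `m = n + |s|`. -/
noncomputable def treePoint (s : List ℕ) : ℝ × ℝ :=
  ((nestedInterval (q ∘ Nat.succPNat) s).1,
    1 / (((Function.invFun q (nestedInterval (q ∘ Nat.succPNat) s).1 : ℕ+) : ℕ) +
      s.length : ℝ))

theorem treePoint_snd_pos (s : List ℕ) : 0 < (treePoint q s).2 := by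
  unfold treePoint
  positivity

variable {q}

theorem hasBranch_of_mem_closure_treePoint {S : Set (List ℕ)}
    (hS : ∀ ⦃w s⦄, w <+: s → s ∈ S → w ∈ S) {t : ℝ × ℝ} (ht : t ∈ closure (treePoint q '' S))
    (htL : t ∈ Lset) : HasBranch S := by
  obtain ⟨u, hu, hlim⟩ := mem_closure_iff_seq_limit.1 ht
  choose s hsS hs using hu
  have hlim' : Tendsto (treePoint q ∘ s) atTop (𝓝 t) := by
    simpa [Function.comp_def, hs] using hlim
  refine List.hasBranch_of_tendsto hS (a := fun w => (nestedInterval (q ∘ Nat.succPNat) w).1)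
    (eventually_nestedInterval_fst_mem _) hsS (fun w => ?_)
    (fun ⟨w, hw⟩ => not_irrational_nestedInterval_fst _ w (hw ▸ htL.2.1)) hlim'.fst_nhds
  have hne : t ≠ treePoint q w := fun h => (treePoint_snd_pos q w).ne' (h ▸ htL.2.2)
  exact (hlim'.eventually_ne hne).mono fun k hk hkw => hk (by rw [Function.comp_apply, hkw])

variable (hrange : range q = {x | x ∈ Icc (0:ℝ) 1 ∧ ¬ Irrational x})
include hrange

theorem treePoint_mem_Dset (s : List ℕ) : treePoint q s ∈ Dset q := by
  set x := (nestedInterval (q ∘ Nat.succPNat) s).1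
  have hxI : x ∈ Icc (0 : ℝ) 1 := by
    simpa using Icc_nestedInterval_antitone _ (List.nil_prefix (l := s))
      (left_mem_Icc.2 (nestedInterval_fst_lt_snd _ s).le)
  have hx : x ∈ range q := by
    rw [hrange]
    exact ⟨hxI, not_irrational_nestedInterval_fst _ s⟩
  refine ⟨Function.invFun q x, ⟨Function.invFun q x + s.length, by positivity⟩,
    Nat.le_add_right _ _, Prod.ext (Function.invFun_eq hx).symm ?_⟩
  simp [treePoint, x]

theorem exists_mem_closure_treePoint_mem_Lset {S : Set (List ℕ)} (hS : HasBranch S) :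
    ∃ t ∈ closure (treePoint q '' S), t ∈ Lset := by
  obtain ⟨z, hz⟩ := hS
  obtain ⟨x, hxI, hxq, hlim⟩ := exists_tendsto_nestedInterval_fst (q ∘ Nat.succPNat) z
  have hirr : Irrational x := by
    by_contra h
    obtain ⟨n, hn⟩ : x ∈ range q := by
      rw [hrange]
      exact ⟨hxI, h⟩
    exact hxq ⟨n.natPred, by simpa using hn⟩
  have hsnd : Tendsto (fun n => (treePoint q (initSeg z n)).2) atTop (𝓝 0) := by
    refine squeeze_zero (fun n => (treePoint_snd_pos q _).le) (fun n => ?_)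
      tendsto_one_div_add_atTop_nhds_zero_nat
    simp only [treePoint, List.length_initSeg]
    have : (1 : ℝ) ≤
        ((Function.invFun q (nestedInterval (q ∘ Nat.succPNat) (initSeg z n)).1 : ℕ+) : ℕ) :=
      Nat.one_le_cast.2 (PNat.pos _)
    exact one_div_le_one_div_of_le (by positivity) (by linarith)
  exact ⟨(x, 0), mem_closure_of_tendsto (hlim.prodMk_nhds hsnd)
    (.of_forall fun n => ⟨_, hz n, rfl⟩), hxI, hirr, rfl⟩

end TreePoints

theorem measurable_closure_image {α X ι : Type*} [MeasurableSpace α] [TopologicalSpace X]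
    [Countable ι] (p : ι → X) {M : ι → Set α} (hM : ∀ i, MeasurableSet (M i)) :
    @Measurable α _ _ (effrosSigma X)
      fun a => (⟨closure (p '' {i | a ∈ M i}), isClosed_closure⟩ : {A : Set X // IsClosed A}) := by
  refine measurable_generateFrom fun _ ⟨U, hU, hEq⟩ => ?_
  subst hEq
  convert MeasurableSet.biUnion (to_countable {i | p i ∈ U}) fun i _ => hM i
  ext a
  simp only [mem_preimage, mem_ofPred_eq, closure_inter_open_nonempty_iff hU]
  simp [Set.Nonempty, and_comm]

theorem souslin_set_containing_closed_subsets_of_D_meets_L_general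
    (q : ℕ+ → ℝ)
    (hrange : range q = {x | x ∈ Icc (0:ℝ) 1 ∧ ¬ Irrational x})
    (𝓔 : Set {A : Set (Tset q) // IsClosed A})
    (h𝓔 : IsSouslinIn (effrosSigma (Tset q)) 𝓔)
    (h𝓓 : {A : {A : Set (Tset q) // IsClosed A} |
        ∀ x ∈ (A : Set (Tset q)), (x : ℝ × ℝ) ∈ Dset q} ⊆ 𝓔) :
    ∃ A ∈ 𝓔, ∃ x : Tset q, x ∈ (A : Set (Tset q)) ∧ (x : ℝ × ℝ) ∈ Lset := by
  by_contra! hL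
  let p : List ℕ → Tset q := fun s => ⟨treePoint q s, Or.inr (treePoint_mem_Dset hrange s)⟩
  have hp (x : ℕ → Bool) : Subtype.val '' (p '' codedTree x x) = treePoint q '' codedTree x x :=
    image_image ..
  refine not_isSouslinIn_setOf_not_hasBranch_codedTree ?_
  convert h𝓔.preimage (measurable_closure_image p measurableSet_setOf_mem_codedTree) using 1
  ext x
  refine ⟨fun hx => h𝓓 fun t ht => t.2.resolve_left fun htL => hx ?_, fun hx hbr => ?_⟩
  · exact hasBranch_of_mem_closure_treePoint (fun _ _ => mem_codedTree_of_prefix)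
      (hp x ▸ closure_subtype.1 ht) htL
  · obtain ⟨t, ht, htL⟩ := exists_mem_closure_treePoint_mem_Lset hrange hbr
    exact hL _ hx ⟨t, Or.inl htL⟩ (closure_subtype.2 (hp x ▸ ht)) htL

/-- Lemma 2.2.1. -/
theorem souslin_set_containing_closed_subsets_of_D_meets_L
    (q : ℕ+ → ℝ) (hq : Function.Injective q)
    (hrange : range q = {x | x ∈ Icc (0:ℝ) 1 ∧ ¬ Irrational x})
    (𝓔 : Set {A : Set (Tset q) // IsClosed A})
    (h𝓔 : IsSouslinIn (effrosSigma (Tset q)) 𝓔)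
    (h𝓓 : {A : {A : Set (Tset q) // IsClosed A} |
        ∀ x ∈ (A : Set (Tset q)), (x : ℝ × ℝ) ∈ Dset q} ⊆ 𝓔) :
    ∃ A ∈ 𝓔, ∃ x : Tset q, x ∈ (A : Set (Tset q)) ∧ (x : ℝ × ℝ) ∈ Lset :=
  souslin_set_containing_closed_subsets_of_D_meets_L_general q hrange 𝓔 h𝓔 h𝓓
end

section
/- Let f : E → F be a continuous map of an analytic space E onto a non-σ-compact metrizable space F. Then there exist a closed subspace P of F homeomorphic to the irrationals ℕ^ℕ and continuous maps gₙ : P → E (n = 1, 2, …) such that, for each t ∈ P, the set {gₙ(t) : n = 1, 2, …} is a dense subset of the fiber f⁻¹(t). -/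
/-!
Composing `f` with a continuous surjection `ℕ^ℕ → E` reduces everything to a continuous
surjection `h : ℕ^ℕ → F`. Call a set σ-bounded if it lies in a σ-compact set; `F` is not.
A Hurewicz-type construction builds a tree of balls with radii `≤ 2⁻ⁿ`, siblings disjoint and
locally finite, each carrying a `core` that is not σ-bounded; the branches give a closed
embedding `p : ℕ^ℕ → F`. At depth `n + 1` of a branch, the `n`-th basic open set `Oₙ` of `ℕ^ℕ`
is dealt with: if the part of the core over which the fiber of `h` meets `Oₙ` is not
σ-bounded, we commit to it and grow inside `Oₙ` a chain of cylinders whose limit is a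
continuous section of `h` over `p`; otherwise that part is covered by countably many compact
sets, which the later balls dodge one at a time, so that the fiber over the point of the branch
misses `Oₙ`. Hence the sections are dense in every fiber.
-/

open Set Topology TopologicalSpace MeasureTheory

open Metric Filter PiNat Function

section ListCylinder

lemma exists_cylinder_subset {x : ℕ → ℕ} {s : Set (ℕ → ℕ)} (hs : s ∈ 𝓝 x) :
    ∃ n, cylinder x n ⊆ s := by
  obtain ⟨_, ⟨y, n, rfl⟩, hxy, hys⟩ :=
    (isTopologicalBasis_cylinders fun _ => ℕ).mem_nhds_iff.1 hs
  exact ⟨n, mem_cylinder_iff_eq.1 hxy ▸ hys⟩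

def listCylinder (w : List ℕ) : Set (ℕ → ℕ) := {x | ∀ i (hi : i < w.length), x i = w[i]}

@[simp]
lemma listCylinder_nil : listCylinder [] = univ := by
  simp [listCylinder]

lemma listCylinder_ofFn (x : ℕ → ℕ) (n : ℕ) :
    listCylinder (List.ofFn fun i : Fin n => x i) = cylinder x n := by
  ext y
  simp [listCylinder, mem_cylinder_iff]

lemma isOpen_listCylinder (w : List ℕ) : IsOpen (listCylinder w) := by
  have : listCylinder w = ⋂ i : Fin w.length, (fun x : ℕ → ℕ => x i) ⁻¹' {w[i]} := by
    ext x
    simp [listCylinder, Fin.forall_iff]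
  rw [this]
  exact isOpen_iInter_of_finite fun i => (isOpen_discrete _).preimage (continuous_apply _)

lemma listCylinder_anti {w w' : List ℕ} (hw : w <+: w') : listCylinder w' ⊆ listCylinder w :=
  fun x hx i hi => by rw [hx i (hi.trans_le hw.length_le), hw.getElem hi]

lemma exists_listCylinder_subset {w : List ℕ} {O : Set (ℕ → ℕ)} {x : ℕ → ℕ}
    (hxw : x ∈ listCylinder w) (hO : O ∈ 𝓝 x) (L : ℕ) :
    ∃ w', w <+: w' ∧ L ≤ w'.length ∧ x ∈ listCylinder w' ∧ listCylinder w' ⊆ O := by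
  obtain ⟨n, hnO⟩ := exists_cylinder_subset hO
  set N := max n (max L w.length)
  refine ⟨List.ofFn fun i : Fin N => x i, ?_, by simp [N], ?_, ?_⟩
  · refine List.prefix_iff_eq_take.2 (List.ext_getElem (by simp [N]) fun i h₁ h₂ => ?_)
    simp [hxw i h₁]
  · simp [listCylinder_ofFn]
  · rw [listCylinder_ofFn]
    exact (cylinder_anti x (le_max_left _ _)).trans hnO

lemma exists_listCylinder_mem_subset {O : Set (ℕ → ℕ)} {x : ℕ → ℕ} (hO : O ∈ 𝓝 x) :
    ∃ w, x ∈ listCylinder w ∧ listCylinder w ⊆ O := by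
  obtain ⟨w, -, -, hx, hwO⟩ := exists_listCylinder_subset (w := []) (by simp) hO 0
  exact ⟨w, hx, hwO⟩

def listLimit (w : ℕ → List ℕ) (i : ℕ) : ℕ := (w (i + 1)).getD i 0

lemma listLimit_mem {w : ℕ → List ℕ} (hw : ∀ m, w m <+: w (m + 1))
    (hlen : ∀ m, m ≤ (w m).length) (m : ℕ) : listLimit w ∈ listCylinder (w m) := by
  have hmono : ∀ {m m'}, m ≤ m' → w m <+: w m' := fun h =>
    Nat.le_induction List.prefix_rfl (fun _ _ ih => ih.trans (hw _)) _ h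
  intro i hi
  have hi' : i < (w (i + 1)).length := (hlen _).trans_lt' (Nat.lt_succ_self i)
  rw [listLimit, List.getD_eq_getElem _ _ hi']
  rcases le_total m (i + 1) with h | h
  · exact ((hmono h).getElem hi).symm
  · exact (hmono h).getElem hi'

lemma continuous_of_forall_exists_res {f : (ℕ → ℕ) → ℕ → ℕ}
    (hf : ∀ i, ∃ N, ∀ x y, res x N = res y N → f x i = f y i) : Continuous f := by
  refine continuous_pi fun i => IsLocallyConstant.continuous ?_
  obtain ⟨N, hN⟩ := hf i
  refine (IsLocallyConstant.iff_exists_open _).2 fun x => ⟨cylinder x N, isOpen_cylinder _ _ _,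
    self_mem_cylinder _ _, fun y hy => hN y x ?_⟩
  rwa [cylinder_eq_res] at hy

end ListCylinder

section SigmaBounded

variable {X : Type*} [TopologicalSpace X]

def IsSigmaBounded (s : Set X) : Prop := ∃ K, IsSigmaCompact K ∧ s ⊆ K

lemma IsSigmaBounded.mono {s t : Set X} (ht : IsSigmaBounded t) (hst : s ⊆ t) :
    IsSigmaBounded s :=
  let ⟨K, hK, htK⟩ := ht
  ⟨K, hK, hst.trans htK⟩

lemma not_isSigmaBounded_mono {s t : Set X} (hs : ¬ IsSigmaBounded s) (hst : s ⊆ t) :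
    ¬ IsSigmaBounded t :=
  fun ht => hs (ht.mono hst)

lemma IsSigmaCompact.isSigmaBounded {s : Set X} (hs : IsSigmaCompact s) : IsSigmaBounded s :=
  ⟨s, hs, subset_rfl⟩

lemma isSigmaBounded_univ_iff : IsSigmaBounded (univ : Set X) ↔ SigmaCompactSpace X :=
  ⟨fun ⟨_, hK, hu⟩ => isSigmaCompact_univ_iff.1 (univ_subset_iff.1 hu ▸ hK),
    fun _ => isSigmaCompact_univ.isSigmaBounded⟩

lemma isSigmaBounded_iUnion {ι : Type*} [Countable ι] {s : ι → Set X}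
    (hs : ∀ i, IsSigmaBounded (s i)) : IsSigmaBounded (⋃ i, s i) := by
  choose K hK hsK using hs
  exact ⟨⋃ i, K i, isSigmaCompact_iUnion K hK, iUnion_mono hsK⟩

lemma IsSigmaBounded.union {s t : Set X} (hs : IsSigmaBounded s) (ht : IsSigmaBounded t) :
    IsSigmaBounded (s ∪ t) := by
  rw [union_eq_iUnion]
  exact isSigmaBounded_iUnion (Bool.forall_bool.2 ⟨ht, hs⟩)

lemma not_isSigmaBounded_diff {s t : Set X} (hs : ¬ IsSigmaBounded s) (ht : IsSigmaBounded t) :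
    ¬ IsSigmaBounded (s \ t) :=
  fun hst => hs ((hst.union ht).mono (by simp))

lemma exists_not_isSigmaBounded_inter {ι : Type*} [Countable ι] {s : Set X}
    (hs : ¬ IsSigmaBounded s) {t : ι → Set X} (hst : s ⊆ ⋃ i, t i) : ∃ i, ¬ IsSigmaBounded (s ∩ t i) := by
  by_contra! h
  refine hs ((isSigmaBounded_iUnion h).mono fun x hx => ?_)
  obtain ⟨i, hi⟩ := mem_iUnion.1 (hst hx)
  exact mem_iUnion.2 ⟨i, hx, hi⟩

/-- The points near which `s` is σ-bounded are covered by countably many basic open sets on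
which it is. -/
lemma not_isSigmaBounded_inter_setOf [SecondCountableTopology X] {s : Set X}
    (hs : ¬ IsSigmaBounded s) :
    ¬ IsSigmaBounded (s ∩ {x | ∀ u ∈ 𝓝 x, ¬ IsSigmaBounded (s ∩ u)}) := by
  obtain ⟨B, hBc, -, hB⟩ := exists_countable_basis X
  have hbad : IsSigmaBounded (⋃ u : {u ∈ B | IsSigmaBounded (s ∩ u)}, s ∩ u) :=
    haveI := (hBc.mono (sep_subset B fun u => IsSigmaBounded (s ∩ u))).to_subtype
    isSigmaBounded_iUnion fun u => u.2.2
  refine fun hgood => hs ((hgood.union hbad).mono fun x hx => ?_)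
  by_cases! hgx : ∀ u ∈ 𝓝 x, ¬ IsSigmaBounded (s ∩ u)
  · exact Or.inl ⟨hx, hgx⟩
  · obtain ⟨u, hu, hsu⟩ := hgx
    obtain ⟨v, hvB, hxv, hvu⟩ := hB.mem_nhds_iff.1 hu
    exact Or.inr (mem_iUnion.2 ⟨⟨v, hvB, hsu.mono (inter_subset_inter_right s hvu)⟩, hx, hxv⟩)

end SigmaBounded

section MetricSpace

variable {F : Type*} [MetricSpace F]

lemma exists_seq_forall_not_mapClusterPt {S : Set F} (hS : ¬ IsSigmaBounded S) :
    ∃ y : ℕ → F, (∀ n, y n ∈ S) ∧ ∀ z, ¬ MapClusterPt z atTop y := by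
  by_contra! h
  refine hS ((IsSeqCompact.isCompact fun x hx => ?_).isSigmaCompact.isSigmaBounded.mono
    subset_closure)
  choose v hvS hxv using fun n : ℕ =>
    Metric.mem_closure_iff.1 (hx n) (1 / ((n : ℝ) + 1)) Nat.one_div_pos_of_nat
  obtain ⟨z, hz⟩ := h v hvS
  obtain ⟨ψ, hψ, hvz⟩ := hz.tendsto_subseq
  refine ⟨z, mem_closure_of_tendsto hvz (Eventually.of_forall fun n => hvS (ψ n)), ψ, hψ,
    hvz.congr_dist (squeeze_zero (fun _ => dist_nonneg) (fun n => ?_)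
      (tendsto_one_div_add_atTop_nhds_zero_nat.comp hψ.tendsto_atTop))⟩
  rw [dist_comm]
  exact (hxv (ψ n)).le

lemma locallyFinite_singleton_of_forall_not_mapClusterPt {y : ℕ → F}
    (hy : ∀ z, ¬ MapClusterPt z atTop y) : LocallyFinite fun n => ({y n} : Set F) := by
  intro z
  have := hy z
  simp only [mapClusterPt_iff_frequently, Nat.frequently_atTop_iff_infinite, not_forall,
    not_infinite] at this
  obtain ⟨t, ht, hfin⟩ := this
  exact ⟨t, ht, by simpa using hfin⟩

lemma exists_injective_locallyFinite_singleton {S : Set F} (hS : ¬ IsSigmaBounded S) :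
    ∃ y : ℕ → F, (∀ n, y n ∈ S) ∧ Injective y ∧ LocallyFinite fun n => ({y n} : Set F) := by
  obtain ⟨y, hyS, hy⟩ := exists_seq_forall_not_mapClusterPt hS
  have hlf := locallyFinite_singleton_of_forall_not_mapClusterPt hy
  have hfiber : ∀ z, (y ⁻¹' {z}).Finite := fun z => by
    obtain ⟨t, ht, hfin⟩ := hlf z
    exact hfin.subset fun n (hn : y n = z) => ⟨z, by simp [hn], mem_of_mem_nhds ht⟩
  have hinf : (range y).Infinite := fun hfin =>
    infinite_univ (by simpa using hfin.preimage' fun z _ => hfiber z)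
  set e := hinf.natEmbedding
  refine ⟨fun n => e n, fun n => ?_, Subtype.val_injective.comp e.injective, ?_⟩
  · obtain ⟨m, hm⟩ := (e n).2
    simpa [← hm] using hyS m
  · convert hlf.comp_injective ((rangeSplitting_injective y).comp e.injective) using 2 with n
    simp [apply_rangeSplitting]

lemma LocallyFinite.exists_pos_forall_le_dist {ι : Type*} {y : ι → F}
    (hy : LocallyFinite fun i => ({y i} : Set F)) (hinj : Injective y) (i : ι) :
    ∃ ρ > 0, ∀ j ≠ i, ρ ≤ dist (y j) (y i) := by
  obtain ⟨t, ht, hfin⟩ := hy (y i)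
  set A := y '' ({j | ({y j} ∩ t).Nonempty} \ {i})
  have hA : Aᶜ ∈ 𝓝 (y i) := (hfin.sdiff.image y).isClosed.isOpen_compl.mem_nhds
    fun ⟨j, hj, hji⟩ => hj.2 (hinj hji)
  obtain ⟨ρ, hρ, hρA⟩ := Metric.mem_nhds_iff.1 (inter_mem ht hA)
  refine ⟨ρ, hρ, fun j hj => not_lt.1 fun hlt => (hρA hlt).2 ⟨j, ⟨?_, hj⟩, rfl⟩⟩
  exact ⟨y j, rfl, (hρA hlt).1⟩

lemma LocallyFinite.closedBall_of_tendsto {y : ℕ → F} {r : ℕ → ℝ}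
    (hy : LocallyFinite fun n => ({y n} : Set F)) (hr : Tendsto r atTop (𝓝 0)) :
    LocallyFinite fun n => closedBall (y n) (r n) := by
  intro z
  obtain ⟨t, ht, hfin⟩ := hy z
  obtain ⟨ρ, hρ, hρt⟩ := Metric.mem_nhds_iff.1 ht
  have hsmall : {n | ¬ r n < ρ / 2}.Finite := by
    have := hr.eventually (gt_mem_nhds (half_pos hρ))
    rwa [← Nat.cofinite_eq_atTop, eventually_cofinite] at this
  refine ⟨ball z (ρ / 2), ball_mem_nhds z (half_pos hρ), (hfin.union hsmall).subset ?_⟩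
  rintro n ⟨u, hu, huz⟩
  by_cases hn : r n < ρ / 2
  · refine Or.inl ⟨y n, rfl, hρt ?_⟩
    rw [mem_closedBall] at hu
    rw [mem_ball] at huz ⊢
    linarith [dist_triangle_left (y n) z u]
  · exact Or.inr hn

/-- The centers form an injective locally finite sequence of points near which `S` is not
σ-bounded; each radius is at most a third of the distance from its center to the others. -/
lemma exists_pairwise_disjoint_closedBall [SecondCountableTopology F] {S U : Set F}
    (hS : ¬ IsSigmaBounded S) (hU : IsOpen U) (hSU : S ⊆ U) {ε : ℝ} (hε : 0 < ε) :
    ∃ (y : ℕ → F) (r : ℕ → ℝ), (∀ k, 0 < r k ∧ r k ≤ ε ∧ closedBall (y k) (r k) ⊆ U ∧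
        ¬ IsSigmaBounded (S ∩ ball (y k) (r k))) ∧
      Pairwise (Disjoint on fun k => closedBall (y k) (r k)) ∧
      LocallyFinite fun k => closedBall (y k) (r k) := by
  obtain ⟨y, hyS, hinj, hlf⟩ :=
    exists_injective_locallyFinite_singleton (not_isSigmaBounded_inter_setOf hS)
  choose ρ hρ hρy using hlf.exists_pos_forall_le_dist hinj
  choose δ hδ hδU using fun k => nhds_basis_closedBall.mem_iff.1 (hU.mem_nhds (hSU (hyS k).1))
  set r : ℕ → ℝ := fun k => min (min ε ((1 / 2) ^ k)) (min (ρ k / 3) (δ k))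
  have hr_pos : ∀ k, 0 < r k := fun k =>
    lt_min (lt_min hε (by positivity)) (lt_min (by linarith [hρ k]) (hδ k))
  have hr_ρ : ∀ k, r k ≤ ρ k / 3 := fun k => (min_le_right _ _).trans (min_le_left _ _)
  refine ⟨y, r, fun k => ⟨hr_pos k, (min_le_left _ _).trans (min_le_left _ _),
    (closedBall_subset_closedBall ((min_le_right _ _).trans (min_le_right _ _))).trans (hδU k),
    (hyS k).2 _ (ball_mem_nhds _ (hr_pos k))⟩, fun j k hjk => ?_, ?_⟩
  · refine closedBall_disjoint_closedBall ?_
    linarith [hρ j, hr_ρ j, hr_ρ k, hρy j k hjk.symm, hρy k j hjk, dist_comm (y j) (y k)]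
  · refine hlf.closedBall_of_tendsto (squeeze_zero (fun k => (hr_pos k).le)
      (fun k => (min_le_left _ _).trans (min_le_right _ _))
      (tendsto_pow_atTop_nhds_zero_of_lt_one (by norm_num) (by norm_num)))

lemma eq_of_eventually_mem_closedBall {y : ℕ → F} {r : ℕ → ℝ} (hr : Tendsto r atTop (𝓝 0))
    {a b : F} (ha : ∀ᶠ m in atTop, a ∈ closedBall (y m) (r m))
    (hb : ∀ᶠ m in atTop, b ∈ closedBall (y m) (r m)) : a = b := by
  refine dist_le_zero.1 (ge_of_tendsto (by simpa using hr.const_mul 2) ?_)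
  filter_upwards [ha, hb] with m ham hbm
  rw [mem_closedBall] at ham hbm
  linarith [dist_triangle_right a b (y m)]

end MetricSpace

section Scheme

variable {X : Type*} {p : (ℕ → ℕ) → X} {U : List ℕ → Set X}

lemma res_eq_of_mem_scheme (hanti : CantorScheme.Antitone U) (hdisj : CantorScheme.Disjoint U)
    (hp : ∀ x n, p x ∈ U (res x n)) {x y : ℕ → ℕ} {n : ℕ} (h : p y ∈ U (res x n)) :
    res y n = res x n := by
  induction n with
  | zero => rfl
  | succ n ih =>
    rw [res_succ] at h
    have hn : res y n = res x n := ih (hanti _ _ h)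
    rw [res_succ, res_succ, hn]
    congr 1
    by_contra hne
    have hy := hp y (n + 1)
    rw [res_succ, hn] at hy
    exact hdisj _ hne |>.ne_of_mem hy h rfl

variable [TopologicalSpace X]

/-- A point of the closure of the range lies, level by level, in the closure of the image of a
cylinder one level deeper (by local finiteness); these cylinders form a branch, and `hpin`
identifies the point with its image. -/
lemma isClosed_range_of_scheme (hlf : ∀ l, LocallyFinite fun k => U (k :: l))
    (hp : ∀ x n, p x ∈ U (res x n))
    (hpin : ∀ x z, (∀ n, z ∈ closure (U (res x n))) → z = p x) : IsClosed (range p) := by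
  set Q : List ℕ → Set X := fun l => p '' {x | res x l.length = l}
  have hQU : ∀ l, Q l ⊆ U l := by
    rintro l _ ⟨x, hx, rfl⟩
    have := hp x l.length
    rwa [hx] at this
  have hstep : ∀ z l, ∃ k, z ∈ closure (Q l) → z ∈ closure (Q (k :: l)) := by
    intro z l
    by_cases hz : z ∈ closure (Q l)
    · have hQ : Q l ⊆ ⋃ k, Q (k :: l) := by
        rintro _ ⟨x, hx, rfl⟩
        exact mem_iUnion.2 ⟨x l.length, x, by simpa [res_succ] using hx, rfl⟩
      have := closure_mono hQ hz
      rw [((hlf l).subset fun k => hQU _).closure_iUnion] at this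
      obtain ⟨k, hk⟩ := mem_iUnion.1 this
      exact ⟨k, fun _ => hk⟩
    · exact ⟨0, fun h => absurd h hz⟩
  refine isClosed_of_closure_subset fun z hz => ?_
  choose next hnext using hstep z
  let T : ℕ → List ℕ := fun n => Nat.rec [] (fun _ l => next l :: l) n
  set x : ℕ → ℕ := fun n => next (T n)
  have hres : ∀ n, res x n = T n := by
    intro n
    induction n with
    | zero => rfl
    | succ n ih => rw [res_succ, ih]
  have hmem : ∀ n, z ∈ closure (Q (res x n)) := by
    intro n
    induction n with
    | zero => simpa [Q] using hz
    | succ n ih =>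
      rw [hres] at ih ⊢
      exact hnext _ ih
  exact ⟨x, (hpin x z fun n => closure_mono (hQU _) (hmem n)).symm⟩

lemma isClosedEmbedding_of_scheme (hU : ∀ l, IsOpen (U l)) (hanti : CantorScheme.Antitone U)
    (hdisj : CantorScheme.Disjoint U) (hlf : ∀ l, LocallyFinite fun k => U (k :: l))
    (hp : ∀ x n, p x ∈ U (res x n))
    (hpin : ∀ x z, (∀ n, z ∈ closure (U (res x n))) → z = p x) (hcont : Continuous p) :
    IsClosedEmbedding p := by
  have hres := fun {x y n} => res_eq_of_mem_scheme (x := x) (y := y) (n := n) hanti hdisj hp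
  refine ⟨⟨isInducing_iff_nhds.2 fun x => le_antisymm
    (hcont.tendsto x).le_comap fun s hs => ?_, fun x y hxy => ?_⟩,
    isClosed_range_of_scheme hlf hp hpin⟩
  · obtain ⟨n, hn⟩ := exists_cylinder_subset hs
    refine mem_comap.2 ⟨U (res x n), (hU _).mem_nhds (hp x n), fun y hy => hn ?_⟩
    rw [cylinder_eq_res]
    exact hres hy
  · exact (res_injective (funext fun n => hres (hxy ▸ hp x n))).symm

end Scheme

section Extension

variable {F : Type*} [TopologicalSpace F] {h : (ℕ → ℕ) → F}

/-- Countably many such extensions `w'` cover `G`. -/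
lemma exists_extension_not_isSigmaBounded {G : Set F} (hG : ¬ IsSigmaBounded G) {w : List ℕ}
    {O : Set (ℕ → ℕ)} (hO : IsOpen O) (hGw : G ⊆ h '' (listCylinder w ∩ O)) (L : ℕ) :
    ∃ w', w <+: w' ∧ L ≤ w'.length ∧ listCylinder w' ⊆ O ∧
      ¬ IsSigmaBounded (G ∩ h '' listCylinder w') := by
  have hcov : G ⊆ ⋃ w' : {w' : List ℕ // w <+: w' ∧ L ≤ w'.length ∧ listCylinder w' ⊆ O},
      h '' listCylinder w' := by
    intro z hz
    obtain ⟨x, ⟨hxw, hxO⟩, rfl⟩ := hGw hz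
    obtain ⟨w', hww', hL, hxw', hw'O⟩ := exists_listCylinder_subset hxw (hO.mem_nhds hxO) L
    exact mem_iUnion.2 ⟨⟨w', hww', hL, hw'O⟩, x, hxw', rfl⟩
  obtain ⟨⟨w', hww', hL, hw'O⟩, hbig⟩ := exists_not_isSigmaBounded_inter hG hcov
  exact ⟨w', hww', hL, hw'O, hbig⟩

lemma exists_extensions_not_isSigmaBounded {ι : Type*} [DecidableEq ι] (hc : Continuous h)
    (A : Finset ι) (W : ι → List ℕ) {G V : Set F} (hG : ¬ IsSigmaBounded G) (hV : IsOpen V)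
    (hGV : G ⊆ V) (hW : ∀ i ∈ A, G ⊆ h '' listCylinder (W i)) (L : ℕ) :
    ∃ W' : ι → List ℕ, (∀ i ∈ A, W i <+: W' i ∧ L ≤ (W' i).length ∧
        MapsTo h (listCylinder (W' i)) V) ∧
      ¬ IsSigmaBounded {z ∈ G | ∀ i ∈ A, z ∈ h '' listCylinder (W' i)} := by
  induction A using Finset.induction_on generalizing G with
  | empty => exact ⟨W, by simp, by simpa using hG⟩
  | insert a A ha ih =>
    obtain ⟨W', hW', hbig⟩ :=
      ih hG hGV fun i hi => hW i (Finset.mem_insert_of_mem hi)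
    obtain ⟨w, hw, hL, hwV, hbig'⟩ := exists_extension_not_isSigmaBounded hbig
      (hV.preimage hc) (w := W a) (fun z hz => by
        obtain ⟨x, hx, rfl⟩ := hW a (Finset.mem_insert_self a A) hz.1
        exact ⟨x, ⟨hx, hGV hz.1⟩, rfl⟩) L
    have hupdate : ∀ i ∈ A, update W' a w i = W' i := fun i hi =>
      update_of_ne (ne_of_mem_of_not_mem hi ha) _ _
    refine ⟨update W' a w, fun i hi => ?_, not_isSigmaBounded_mono hbig' ?_⟩
    · rcases Finset.mem_insert.1 hi with rfl | hi
      · simpa using ⟨hw, hL, hwV⟩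
      · simpa [hupdate i hi] using hW' i hi
    · rintro z ⟨⟨hzG, hzA⟩, hzw⟩
      refine ⟨hzG, fun i hi => ?_⟩
      rcases Finset.mem_insert.1 hi with rfl | hi
      · simpa using hzw
      · simpa [hupdate i hi] using hzA i hi

end Extension

def basicOpen (n : ℕ) : Set (ℕ → ℕ) := listCylinder (Denumerable.ofNat (List ℕ) n)

@[simp]
lemma basicOpen_zero : basicOpen 0 = univ := by
  simp [basicOpen]

lemma isOpen_basicOpen (n : ℕ) : IsOpen (basicOpen n) :=
  isOpen_listCylinder _

lemma exists_basicOpen_subset {x : ℕ → ℕ} {O : Set (ℕ → ℕ)} (hO : O ∈ 𝓝 x) :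
    ∃ n, x ∈ basicOpen n ∧ basicOpen n ⊆ O := by
  obtain ⟨w, hxw, hwO⟩ := exists_listCylinder_mem_subset hO
  exact ⟨Encodable.encode w, by simpa [basicOpen] using hxw, by simpa [basicOpen] using hwO⟩

/-- A node of depth `level` of the tree of balls. The points coded by branches through it lie in
the ball around `center`, and `core` holds the points still allowed. For `n ∈ committed`,
`chain n` is an initial segment of the `n`-th section, which lies in `basicOpen n`; for the other
`n < level`, the points of `core` whose fiber meets `basicOpen n` are covered by the compact sets
`dodge n i`, which the closed balls of depth `n + i + 2` avoid. -/
structure Stage (F : Type*) where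
  level : ℕ
  center : F
  radius : ℝ
  core : Set F
  committed : Set ℕ
  chain : ℕ → List ℕ
  dodge : ℕ → ℕ → Set F

namespace Stage

variable {F : Type*} [MetricSpace F] (h : (ℕ → ℕ) → F)

structure Valid (s : Stage F) : Prop where
  radius_pos : 0 < s.radius
  radius_le : s.radius ≤ (1 / 2) ^ s.level
  not_isSigmaBounded_core : ¬ IsSigmaBounded s.core
  core_subset : s.core ⊆ ball s.center s.radius
  lt_level : ∀ n ∈ s.committed, n < s.level
  level_le_length : ∀ n ∈ s.committed, s.level ≤ (s.chain n).length
  chain_subset : ∀ n ∈ s.committed, listCylinder (s.chain n) ⊆ basicOpen n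
  mapsTo_chain : ∀ n ∈ s.committed, MapsTo h (listCylinder (s.chain n)) (ball s.center s.radius)
  core_subset_image : ∀ n ∈ s.committed, s.core ⊆ h '' listCylinder (s.chain n)
  isCompact_dodge : ∀ n i, IsCompact (s.dodge n i)
  disjoint_dodge : ∀ n i, n + i + 2 ≤ s.level →
    Disjoint (closedBall s.center s.radius) (s.dodge n i)
  rejected_subset : ∀ n < s.level, n ∉ s.committed →
    s.core ∩ h '' basicOpen n ⊆ ⋃ i, s.dodge n i

/-- The sets `dodge n i` with `n + i + 1 = s.level`, which the children of `s` must avoid. -/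
def dueDodge (s : Stage F) : Set F := ⋃ n ∈ Iio s.level, s.dodge n (s.level - 1 - n)

structure IsChild (s t : Stage F) : Prop where
  level_eq : t.level = s.level + 1
  closedBall_subset : closedBall t.center t.radius ⊆ ball s.center s.radius
  mem_committed_iff : ∀ n < s.level, n ∈ t.committed ↔ n ∈ s.committed
  chain_prefix : ∀ n ∈ s.committed, s.chain n <+: t.chain n
  dodge_eq : ∀ n ≠ s.level, t.dodge n = s.dodge n
  mem_core : ∀ z ∈ s.core, (∀ n < s.level, ∀ i, z ∉ s.dodge n i) →
    z ∈ ball t.center t.radius → (∀ n ∈ t.committed, z ∈ h '' listCylinder (t.chain n)) →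
    z ∈ t.core

/-- Its core is as large as `IsChild.mem_core` allows. -/
def child (s : Stage F) (c : F) (ρ : ℝ) (C : Set ℕ) (W : ℕ → List ℕ) (κ : ℕ → Set F) :
    Stage F where
  level := s.level + 1
  center := c
  radius := ρ
  core := {z ∈ (s.core \ s.dueDodge) ∩ ball c ρ | ∀ n ∈ C, z ∈ h '' listCylinder (W n)}
  committed := C
  chain := W
  dodge := update s.dodge s.level κ

def root (a : F) : Stage F where
  level := 0
  center := a
  radius := 1
  core := ball a 1
  committed := ∅
  chain _ := []
  dodge _ _ := ∅

variable {h}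

lemma Valid.isCompact_dueDodge {s : Stage F} (hs : s.Valid h) : IsCompact s.dueDodge :=
  (finite_Iio _).isCompact_biUnion fun _ _ => hs.isCompact_dodge _ _

lemma valid_root {a : F} (ha : ¬ IsSigmaBounded (ball a 1)) : (root a).Valid h where
  radius_pos := one_pos
  radius_le := by simp [root]
  not_isSigmaBounded_core := ha
  core_subset := subset_rfl
  lt_level _ hn := hn.elim
  level_le_length _ hn := hn.elim
  chain_subset _ hn := hn.elim
  mapsTo_chain _ hn := hn.elim
  core_subset_image _ hn := hn.elim
  isCompact_dodge _ _ := isCompact_empty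
  disjoint_dodge _ _ _ := disjoint_empty _
  rejected_subset n hn := absurd hn (Nat.not_lt_zero n)

section Child

variable {s : Stage F} {c : F} {ρ : ℝ} {C : Set ℕ} {W : ℕ → List ℕ} {κ : ℕ → Set F}

lemma valid_child (hs : s.Valid h) (hρ : 0 < ρ) (hρle : ρ ≤ (1 / 2) ^ (s.level + 1))
    (hball : closedBall c ρ ⊆ ball s.center s.radius) (hD : Disjoint (closedBall c ρ) s.dueDodge)
    (hCs : ∀ n < s.level, n ∈ C ↔ n ∈ s.committed)
    (hC : ∀ n ∈ C, n ≤ s.level ∧ s.level + 1 ≤ (W n).length ∧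
      listCylinder (W n) ⊆ basicOpen n ∧ MapsTo h (listCylinder (W n)) (ball c ρ))
    (hκ : ∀ i, IsCompact (κ i))
    (hrej : s.level ∉ C → (s.child h c ρ C W κ).core ∩ h '' basicOpen s.level ⊆ ⋃ i, κ i)
    (hbig : ¬ IsSigmaBounded (s.child h c ρ C W κ).core) : (s.child h c ρ C W κ).Valid h where
  radius_pos := hρ
  radius_le := hρle
  not_isSigmaBounded_core := hbig
  core_subset _ hz := hz.1.2
  lt_level n hn := Nat.lt_succ_of_le (hC n hn).1
  level_le_length n hn := (hC n hn).2.1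
  chain_subset n hn := (hC n hn).2.2.1
  mapsTo_chain n hn := (hC n hn).2.2.2
  core_subset_image n hn _ hz := hz.2 n hn
  isCompact_dodge n i := by
    rcases eq_or_ne n s.level with rfl | hn
    · simpa [child] using hκ i
    · simpa [child, hn] using hs.isCompact_dodge n i
  disjoint_dodge n i hni := by
    have hn : n ≠ s.level := by simp [child] at hni; omega
    simp only [child, update_of_ne hn]
    by_cases hsmall : n + i + 2 ≤ s.level
    · exact (hs.disjoint_dodge n i hsmall).mono_left (hball.trans ball_subset_closedBall)
    · obtain rfl : i = s.level - 1 - n := by simp [child] at hni; omega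
      exact hD.mono_right (subset_biUnion_of_mem (u := fun n => s.dodge n (s.level - 1 - n))
        (by simp [child] at hni; simp; omega))
  rejected_subset n hn hnC := by
    rcases eq_or_ne n s.level with rfl | hne
    · simpa [child] using hrej hnC
    · have hlt : n < s.level := by simp [child] at hn; omega
      simp only [child, update_of_ne hne]
      exact fun z hz => hs.rejected_subset n hlt (fun h' => hnC ((hCs n hlt).2 h'))
        ⟨hz.1.1.1.1, hz.2⟩

lemma isChild_child (hball : closedBall c ρ ⊆ ball s.center s.radius)
    (hCs : ∀ n < s.level, n ∈ C ↔ n ∈ s.committed)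
    (hW : ∀ n ∈ s.committed, s.chain n <+: W n) : IsChild h s (s.child h c ρ C W κ) where
  level_eq := rfl
  closedBall_subset := hball
  mem_committed_iff := hCs
  chain_prefix := hW
  dodge_eq n hn := update_of_ne hn _ _
  mem_core z hz hzD hzb hzC := by
    refine ⟨⟨⟨hz, fun hz' => ?_⟩, hzb⟩, hzC⟩
    obtain ⟨n, hn, hzn⟩ := mem_iUnion₂.1 hz'
    exact hzD n hn _ hzn

end Child

lemma Valid.exists_extended_chains (hc : Continuous h) {s : Stage F} (hs : s.Valid h) {c : F}
    {ρ : ℝ} (hbig : ¬ IsSigmaBounded ((s.core \ s.dueDodge) ∩ ball c ρ)) :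
    ∃ W : ℕ → List ℕ, (∀ n ∈ s.committed, s.chain n <+: W n ∧ s.level + 1 ≤ (W n).length ∧
        listCylinder (W n) ⊆ basicOpen n ∧ MapsTo h (listCylinder (W n)) (ball c ρ)) ∧
      ¬ IsSigmaBounded {z ∈ (s.core \ s.dueDodge) ∩ ball c ρ |
        ∀ n ∈ s.committed, z ∈ h '' listCylinder (W n)} := by
  classical
  set A := (Finset.range s.level).filter (· ∈ s.committed)
  have hA : ∀ n, n ∈ A ↔ n ∈ s.committed := fun n => by
    simpa [A] using fun hn => hs.lt_level n hn
  obtain ⟨W, hW, hbigW⟩ := exists_extensions_not_isSigmaBounded hc A s.chain hbig isOpen_ball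
    inter_subset_right (fun n hn => inter_subset_left.trans
      (sdiff_subset.trans (hs.core_subset_image n ((hA n).1 hn)))) (s.level + 1)
  simp only [hA] at hW hbigW
  exact ⟨W, fun n hn => ⟨(hW n hn).1, (hW n hn).2.1,
    (listCylinder_anti (hW n hn).1).trans (hs.chain_subset n hn), (hW n hn).2.2⟩, hbigW⟩

/-- After extending the committed chains into the new ball, either commit to
`basicOpen s.level`, if this keeps the core not σ-bounded, or dodge the σ-bounded part of the
core lying over it. -/
lemma exists_child (hc : Continuous h) {s : Stage F} (hs : s.Valid h) {c : F} {ρ : ℝ}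
    (hρ : 0 < ρ) (hρle : ρ ≤ (1 / 2) ^ (s.level + 1))
    (hball : closedBall c ρ ⊆ ball s.center s.radius) (hD : Disjoint (closedBall c ρ) s.dueDodge)
    (hbig : ¬ IsSigmaBounded ((s.core \ s.dueDodge) ∩ ball c ρ)) :
    ∃ t, t.Valid h ∧ IsChild h s t ∧ t.center = c ∧ t.radius = ρ := by
  classical
  obtain ⟨W, hW, hbigW⟩ := hs.exists_extended_chains hc hbig
  have hWs : ∀ n ∈ s.committed, n ≤ s.level ∧ s.level + 1 ≤ (W n).length ∧
      listCylinder (W n) ⊆ basicOpen n ∧ MapsTo h (listCylinder (W n)) (ball c ρ) :=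
    fun n hn => ⟨(hs.lt_level n hn).le, (hW n hn).2⟩
  by_cases hrej : IsSigmaBounded ({z ∈ (s.core \ s.dueDodge) ∩ ball c ρ |
    ∀ n ∈ s.committed, z ∈ h '' listCylinder (W n)} ∩ h '' basicOpen s.level)
  · obtain ⟨_, ⟨κ, hκ, rfl⟩, hK⟩ := hrej
    exact ⟨s.child h c ρ s.committed W κ, valid_child hs hρ hρle hball hD (fun _ _ => Iff.rfl)
      hWs hκ (fun _ => hK) hbigW, isChild_child hball (fun _ _ => Iff.rfl)
      (fun n hn => (hW n hn).1), rfl, rfl⟩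
  · obtain ⟨w, -, hwlen, hwO, hbigw⟩ := exists_extension_not_isSigmaBounded hrej
      ((isOpen_basicOpen _).inter (isOpen_ball.preimage hc)) (w := [])
      (by rintro _ ⟨hz, x, hx, rfl⟩; exact ⟨x, ⟨by simp, hx, hz.1.2⟩, rfl⟩) (s.level + 1)
    have hW' : ∀ n ∈ s.committed, update W s.level w n = W n := fun n hn =>
      update_of_ne (hs.lt_level n hn).ne _ _
    refine ⟨s.child h c ρ (insert s.level s.committed) (update W s.level w) (fun _ => ∅),
      valid_child hs hρ hρle hball hD (fun n hn => by simp [hn.ne]) (fun n hn => ?_)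
        (fun _ => isCompact_empty) (fun hn => absurd (mem_insert _ _) hn)
        (not_isSigmaBounded_mono hbigw ?_),
      isChild_child hball (fun n hn => by simp [hn.ne]) (fun n hn => hW' n hn ▸ (hW n hn).1),
      rfl, rfl⟩
    · rcases mem_insert_iff.1 hn with rfl | hn
      · simpa using ⟨hwlen, fun x hx => (hwO hx).1, fun x hx => (hwO hx).2⟩
      · simpa [hW' n hn] using hWs n hn
    · rintro z ⟨⟨⟨hz, hzW⟩, -⟩, hzw⟩
      refine ⟨hz, fun n hn => ?_⟩
      rcases mem_insert_iff.1 hn with rfl | hn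
      · simpa using hzw
      · simpa [hW' n hn] using hzW n hn

lemma exists_children [SecondCountableTopology F] (hc : Continuous h) {s : Stage F}
    (hs : s.Valid h) :
    ∃ t : ℕ → Stage F, (∀ k, (t k).Valid h ∧ IsChild h s (t k)) ∧
      Pairwise (Disjoint on fun k => ball (t k).center (t k).radius) ∧
      LocallyFinite fun k => ball (t k).center (t k).radius := by
  have hD := hs.isCompact_dueDodge
  obtain ⟨y, r, hyr, hdisj, hlf⟩ := exists_pairwise_disjoint_closedBall
    (not_isSigmaBounded_diff hs.not_isSigmaBounded_core hD.isSigmaCompact.isSigmaBounded)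
    (isOpen_ball.sdiff hD.isClosed) (sdiff_subset_sdiff_left hs.core_subset)
    (ε := (1 / 2) ^ (s.level + 1)) (by positivity)
  choose t ht hchild hy hr using fun k => exists_child hc hs (hyr k).1 (hyr k).2.1
    ((hyr k).2.2.1.trans sdiff_subset) (disjoint_sdiff_left.mono_left (hyr k).2.2.1)
    (hyr k).2.2.2
  refine ⟨t, fun k => ⟨ht k, hchild k⟩, fun j k hjk => ?_, ?_⟩
  · simp only [onFun, hy, hr]
    exact (hdisj hjk).mono ball_subset_closedBall ball_subset_closedBall
  · simp only [hy, hr]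
    exact hlf.subset fun k => ball_subset_closedBall

lemma Valid.zero_mem_committed (hsurj : Surjective h) {s : Stage F} (hs : s.Valid h)
    (h0 : 0 < s.level) : 0 ∈ s.committed := by
  by_contra h0c
  refine hs.not_isSigmaBounded_core ⟨⋃ i, s.dodge 0 i,
    isSigmaCompact_iUnion_of_isCompact _ fun i => hs.isCompact_dodge 0 i,
    fun z hz => hs.rejected_subset 0 h0 h0c ⟨hz, by simpa using hsurj z⟩⟩

section Tree

variable [SecondCountableTopology F] (hc : Continuous h) {a : F} (ha : ¬ IsSigmaBounded (ball a 1))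

/-- Indexed by reversed initial segments, as in `PiNat.res`. -/
noncomputable def node : List ℕ → {s : Stage F // s.Valid h}
  | [] => ⟨root a, valid_root ha⟩
  | k :: l => ⟨(exists_children hc (node l).2).choose k,
      ((exists_children hc (node l).2).choose_spec.1 k).1⟩

lemma isChild_node_cons (k : ℕ) (l : List ℕ) :
    IsChild h (node hc ha l).1 (node hc ha (k :: l)).1 :=
  ((exists_children hc (node hc ha l).2).choose_spec.1 k).2

lemma pairwise_disjoint_node_cons (l : List ℕ) :
    Pairwise (Disjoint on fun k =>
      ball (node hc ha (k :: l)).1.center (node hc ha (k :: l)).1.radius) :=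
  (exists_children hc (node hc ha l).2).choose_spec.2.1

lemma locallyFinite_node_cons (l : List ℕ) :
    LocallyFinite fun k => ball (node hc ha (k :: l)).1.center (node hc ha (k :: l)).1.radius :=
  (exists_children hc (node hc ha l).2).choose_spec.2.2

noncomputable def branch (x : ℕ → ℕ) (n : ℕ) : Stage F := (node hc ha (res x n)).1

variable {hc ha} {x : ℕ → ℕ}

lemma valid_branch (x : ℕ → ℕ) (n : ℕ) : (branch hc ha x n).Valid h :=
  (node hc ha (res x n)).2

lemma isChild_branch (x : ℕ → ℕ) (n : ℕ) :
    IsChild h (branch hc ha x n) (branch hc ha x (n + 1)) := by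
  rw [branch, branch, res_succ]
  exact isChild_node_cons hc ha _ _

@[simp]
lemma level_branch (x : ℕ → ℕ) (n : ℕ) : (branch hc ha x n).level = n := by
  induction n with
  | zero => rfl
  | succ n ih => rw [(isChild_branch x n).level_eq, ih]

lemma branch_eq_of_res_eq {y : ℕ → ℕ} {N n : ℕ} (hxy : res x N = res y N) (hn : n ≤ N) :
    branch hc ha x n = branch hc ha y n := by
  rw [branch, branch, res_eq_res.2 fun m hm => res_eq_res.1 hxy (hm.trans_le hn)]

lemma mem_committed_branch_iff {n m m' : ℕ} (hn : n < m) (hm : m ≤ m') :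
    n ∈ (branch hc ha x m').committed ↔ n ∈ (branch hc ha x m).committed := by
  induction m', hm using Nat.le_induction with
  | base => rfl
  | succ m' hm ih =>
    rw [(isChild_branch x m').mem_committed_iff n (by simp; omega), ih]

lemma mem_committed_branch {n m : ℕ} (hn : n ∈ (branch hc ha x (n + 1)).committed)
    (hm : n + 1 ≤ m) : n ∈ (branch hc ha x m).committed :=
  (mem_committed_branch_iff (Nat.lt_succ_self n) hm).2 hn

lemma dodge_branch_eq {n m m' : ℕ} (hn : n < m) (hm : m ≤ m') :
    (branch hc ha x m').dodge n = (branch hc ha x m).dodge n := by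
  induction m', hm using Nat.le_induction with
  | base => rfl
  | succ m' hm ih =>
    rw [(isChild_branch x m').dodge_eq n (by simp; omega), ih]

lemma chain_branch_prefix {n m m' : ℕ} (hn : n ∈ (branch hc ha x m).committed) (hm : m ≤ m') :
    (branch hc ha x m).chain n <+: (branch hc ha x m').chain n := by
  have hnm : n < m := by simpa using (valid_branch x m).lt_level n hn
  induction m', hm using Nat.le_induction with
  | base => exact List.prefix_rfl
  | succ m' hm ih =>
    exact ih.trans ((isChild_branch x m').chain_prefix n
      ((mem_committed_branch_iff hnm hm).2 hn))

variable (hc ha) in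
/-- The `n`-th section; meaningful only once `n` is committed along `x`. -/
noncomputable def chainLimit (n : ℕ) (x : ℕ → ℕ) : ℕ → ℕ :=
  listLimit fun m => (branch hc ha x (m + (n + 1))).chain n

lemma chainLimit_mem {n m : ℕ} (hn : n ∈ (branch hc ha x (n + 1)).committed) (hm : n + 1 ≤ m) :
    chainLimit hc ha n x ∈ listCylinder ((branch hc ha x m).chain n) := by
  obtain ⟨k, rfl⟩ := Nat.exists_eq_add_of_le' hm
  refine listLimit_mem (w := fun j => (branch hc ha x (j + (n + 1))).chain n)
    (fun j => chain_branch_prefix (mem_committed_branch hn (by omega)) (by omega))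
    (fun j => ?_) k
  have := (valid_branch x (j + (n + 1))).level_le_length n (mem_committed_branch hn (by omega))
  simp only [level_branch] at this
  omega

lemma chainLimit_eq_of_res_eq {y : ℕ → ℕ} {N n i : ℕ} (hxy : res x N = res y N)
    (hi : i + 1 + (n + 1) ≤ N) : chainLimit hc ha n x i = chainLimit hc ha n y i := by
  simp only [chainLimit, listLimit, branch_eq_of_res_eq hxy hi]

lemma continuous_chainLimit (n : ℕ) : Continuous (chainLimit hc ha n) :=
  continuous_of_forall_exists_res fun i =>
    ⟨i + 1 + (n + 1), fun _ _ hxy => chainLimit_eq_of_res_eq hxy le_rfl⟩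

variable (hc ha) in
/-- Chain `0` is committed from depth `1` on, since `basicOpen 0 = univ`
(`Valid.zero_mem_committed`). -/
noncomputable def point (x : ℕ → ℕ) : F := h (chainLimit hc ha 0 x)

lemma zero_mem_committed_branch (hsurj : Surjective h) (x : ℕ → ℕ) :
    0 ∈ (branch hc ha x 1).committed :=
  (valid_branch x 1).zero_mem_committed hsurj (by simp)

lemma point_mem_ball (hsurj : Surjective h) (x : ℕ → ℕ) (n : ℕ) :
    point hc ha x ∈ ball (branch hc ha x n).center (branch hc ha x n).radius := by
  have h0 : 0 ∈ (branch hc ha x 1).committed := zero_mem_committed_branch hsurj x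
  have key : ∀ n, 1 ≤ n →
      point hc ha x ∈ ball (branch hc ha x n).center (branch hc ha x n).radius :=
    fun n hn => (valid_branch x n).mapsTo_chain 0 (mem_committed_branch h0 hn)
      (chainLimit_mem h0 hn)
  rcases n with _ | n
  · exact (isChild_branch x 0).closedBall_subset (ball_subset_closedBall (key 1 le_rfl))
  · exact key _ (Nat.succ_pos n)

lemma tendsto_radius_branch (x : ℕ → ℕ) :
    Tendsto (fun n => (branch hc ha x n).radius) atTop (𝓝 0) := by
  refine squeeze_zero (fun n => (valid_branch (hc := hc) (ha := ha) x n).radius_pos.le)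
    (fun n => ?_)
    (tendsto_pow_atTop_nhds_zero_of_lt_one (r := 1 / 2) (by norm_num) (by norm_num))
  simpa using (valid_branch (hc := hc) (ha := ha) x n).radius_le

lemma eq_point_of_eventually_mem (hsurj : Surjective h) {z : F}
    (hz : ∀ᶠ n in atTop, z ∈ closedBall (branch hc ha x n).center (branch hc ha x n).radius) :
    z = point hc ha x :=
  eq_of_eventually_mem_closedBall (tendsto_radius_branch x) hz
    (Eventually.of_forall fun n => ball_subset_closedBall (point_mem_ball hsurj x n))

lemma map_chainLimit (hsurj : Surjective h) {n : ℕ}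
    (hn : n ∈ (branch hc ha x (n + 1)).committed) : h (chainLimit hc ha n x) = point hc ha x :=
  eq_point_of_eventually_mem hsurj (eventually_atTop.2 ⟨n + 1, fun _ hm => ball_subset_closedBall
    ((valid_branch x _).mapsTo_chain n (mem_committed_branch hn hm) (chainLimit_mem hn hm))⟩)

lemma point_notMem_dodge (hsurj : Surjective h) {n m i : ℕ} (hn : n < m) :
    point hc ha x ∉ (branch hc ha x m).dodge n i := by
  have hdisj := (valid_branch (hc := hc) (ha := ha) x (n + i + 2)).disjoint_dodge n i (by simp)
  rw [dodge_branch_eq (m := n + 1) (by omega) (by omega)] at hdisj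
  rw [dodge_branch_eq (m := n + 1) (by omega) hn]
  exact hdisj.notMem_of_mem_left (ball_subset_closedBall (point_mem_ball hsurj x _))

lemma point_mem_core (hsurj : Surjective h) (x : ℕ → ℕ) (n : ℕ) :
    point hc ha x ∈ (branch hc ha x n).core := by
  induction n with
  | zero => exact point_mem_ball hsurj x 0
  | succ n ih =>
    refine (isChild_branch x n).mem_core _ ih
      (fun k hk i => point_notMem_dodge hsurj (by simpa using hk))
      (point_mem_ball hsurj x _) fun k hk => ?_
    have hk' : k ∈ (branch hc ha x (k + 1)).committed := by
      have := (valid_branch x (n + 1)).lt_level k hk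
      simp only [level_branch] at this
      exact (mem_committed_branch_iff (Nat.lt_succ_self k) this).1 hk
    exact ⟨chainLimit hc ha k x,
      chainLimit_mem hk' (by simpa using (valid_branch x _).lt_level k hk),
      map_chainLimit hsurj hk'⟩

/-- Where the fiber over the point meets `basicOpen c`, the index `c` was committed: otherwise
the point would lie in a dodge set that its own balls avoid. -/
lemma mem_committed_of_mem_fiber (hsurj : Surjective h) {y : ℕ → ℕ} {c : ℕ}
    (hy : h y = point hc ha x) (hyc : y ∈ basicOpen c) :
    c ∈ (branch hc ha x (c + 1)).committed := by
  by_contra hc'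
  obtain ⟨i, hi⟩ := mem_iUnion.1 ((valid_branch x (c + 1)).rejected_subset c (by simp) hc'
    ⟨point_mem_core hsurj x (c + 1), y, hyc, hy⟩)
  exact point_notMem_dodge hsurj (Nat.lt_succ_self c) hi

variable (hc ha) in
open Classical in
noncomputable def select (n : ℕ) (x : ℕ → ℕ) : ℕ → ℕ :=
  if n ∈ (branch hc ha x (n + 1)).committed then chainLimit hc ha n x else chainLimit hc ha 0 x

lemma map_select (hsurj : Surjective h) (n : ℕ) (x : ℕ → ℕ) :
    h (select hc ha n x) = point hc ha x := by
  unfold select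
  split_ifs with hn
  · exact map_chainLimit hsurj hn
  · exact map_chainLimit hsurj (zero_mem_committed_branch hsurj x)

lemma continuous_select (n : ℕ) : Continuous (select hc ha n) := by
  refine continuous_of_forall_exists_res fun i => ⟨i + 1 + (n + 1), fun x y hxy => ?_⟩
  have hxy' : branch hc ha x (n + 1) = branch hc ha y (n + 1) :=
    branch_eq_of_res_eq hxy (by omega)
  rw [select, select, hxy']
  split_ifs
  · exact chainLimit_eq_of_res_eq hxy le_rfl
  · exact chainLimit_eq_of_res_eq (n := 0) hxy (by omega)

lemma fiber_subset_closure_range_select (hsurj : Surjective h) (x : ℕ → ℕ) :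
    h ⁻¹' {point hc ha x} ⊆ closure (range fun n => select hc ha n x) := by
  refine fun y hy => mem_closure_iff_nhds.2 fun t ht => ?_
  obtain ⟨c, hyc, hct⟩ := exists_basicOpen_subset ht
  have hc' := mem_committed_of_mem_fiber hsurj hy hyc
  refine ⟨select hc ha c x, hct ?_, c, rfl⟩
  rw [select, if_pos hc']
  exact (valid_branch x (c + 1)).chain_subset c hc' (chainLimit_mem hc' le_rfl)

lemma isClosedEmbedding_point (hsurj : Surjective h) : IsClosedEmbedding (point hc ha) :=
  isClosedEmbedding_of_scheme (U := fun l => ball (node hc ha l).1.center (node hc ha l).1.radius)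
    (fun _ => isOpen_ball)
    (fun l k => ball_subset_closedBall.trans (isChild_node_cons hc ha k l).closedBall_subset)
    (pairwise_disjoint_node_cons hc ha) (locallyFinite_node_cons hc ha)
    (point_mem_ball hsurj)
    (fun _ _ hz => eq_point_of_eventually_mem hsurj
      (Eventually.of_forall fun n => closure_ball_subset_closedBall (hz n)))
    (hc.comp (continuous_chainLimit 0))

end Tree

end Stage

lemma exists_not_isSigmaBounded_ball {F : Type*} [MetricSpace F] [SeparableSpace F]
    (hF : ¬ SigmaCompactSpace F) : ∃ a : F, ¬ IsSigmaBounded (ball a 1) := by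
  rw [← isSigmaBounded_univ_iff] at hF
  rcases isEmpty_or_nonempty F with hempty | hne
  · exact absurd (isSigmaCompact_empty.isSigmaBounded.mono (by simp)) hF
  obtain ⟨u, hu⟩ := exists_dense_seq F
  obtain ⟨n, hn⟩ := exists_not_isSigmaBounded_inter hF (t := fun n => ball (u n) 1)
    fun z _ => mem_iUnion.2 (by simpa [dist_comm] using Metric.denseRange_iff.1 hu z 1 one_pos)
  exact ⟨u n, by simpa using hn⟩

theorem exists_isClosedEmbedding_and_dense_sections {F : Type*} [MetricSpace F]
    [SecondCountableTopology F] {h : (ℕ → ℕ) → F} (hc : Continuous h) (hsurj : Surjective h)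
    (hF : ¬ SigmaCompactSpace F) :
    ∃ (p : (ℕ → ℕ) → F) (g : ℕ → (ℕ → ℕ) → ℕ → ℕ), IsClosedEmbedding p ∧
      (∀ n, Continuous (g n)) ∧ (∀ n x, h (g n x) = p x) ∧
      ∀ x, h ⁻¹' {p x} ⊆ closure (range fun n => g n x) := by
  obtain ⟨a, ha⟩ := exists_not_isSigmaBounded_ball hF
  exact ⟨Stage.point hc ha, Stage.select hc ha, Stage.isClosedEmbedding_point hsurj,
    Stage.continuous_select, Stage.map_select hsurj, Stage.fiber_subset_closure_range_select hsurj⟩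

theorem exists_closed_copy_of_irrationals_and_dense_selections_general
    {E F : Type} [TopologicalSpace E]
    (hE : ∃ g : (ℕ → ℕ) → E, Continuous g ∧ Function.Surjective g)
    [TopologicalSpace F] [MetrizableSpace F] (hF : ¬ SigmaCompactSpace F)
    (f : E → F) (hf : Continuous f) (hsurj : Function.Surjective f) :
    ∃ P : Set F, IsClosed P ∧ Nonempty (P ≃ₜ (ℕ → ℕ)) ∧
      ∃ g : ℕ → (P → E), (∀ n, Continuous (g n)) ∧
        (∀ n (t : P), f (g n t) = (t : F)) ∧
        (∀ t : P, f ⁻¹' {(t : F)} ⊆ closure (range fun n => g n t)) := by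
  obtain ⟨e, he, hes⟩ := hE
  let := metrizableSpaceMetric F
  have : SeparableSpace F := (hsurj.comp hes).denseRange.separableSpace (hf.comp he)
  have := UniformSpace.secondCountable_of_separable F
  obtain ⟨p, g, hp, hg, hgp, hdense⟩ :=
    exists_isClosedEmbedding_and_dense_sections (hf.comp he) (hsurj.comp hes) hF
  set φ := hp.toHomeomorph.symm
  have hpφ : ∀ t, p (φ t) = t := fun t => by
    rw [← hp.toHomeomorph_apply_coe, Homeomorph.apply_symm_apply]
  refine ⟨range p, hp.isClosed_range, ⟨φ⟩, fun n t => e (g n (φ t)),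
    fun n => he.comp ((hg n).comp φ.continuous), fun n t => (hgp n (φ t)).trans (hpφ t),
    fun t y hy => ?_⟩
  obtain ⟨y, rfl⟩ := hes y
  have hy' : y ∈ (f ∘ e) ⁻¹' {p (φ t)} := by simpa [hpφ] using hy
  have := image_closure_subset_closure_image he (mem_image_of_mem e (hdense (φ t) hy'))
  rwa [← range_comp] at this

/-- Lemma 2.3.1. -/
theorem exists_closed_copy_of_irrationals_and_dense_selections
    {E F : Type} [TopologicalSpace E] [MetrizableSpace E]
    (hE : ∃ g : (ℕ → ℕ) → E, Continuous g ∧ Function.Surjective g)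
    [TopologicalSpace F] [MetrizableSpace F] (hF : ¬ SigmaCompactSpace F)
    (f : E → F) (hf : Continuous f) (hsurj : Function.Surjective f) :
    ∃ P : Set F, IsClosed P ∧ Nonempty (P ≃ₜ (ℕ → ℕ)) ∧
      ∃ g : ℕ → (P → E), (∀ n, Continuous (g n)) ∧
        (∀ n (t : P), f (g n t) = (t : F)) ∧
        (∀ t : P, f ⁻¹' {(t : F)} ⊆ closure (range fun n => g n t)) :=
  exists_closed_copy_of_irrationals_and_dense_selections_general hE hF f hf hsurj
end

section
/- Every complete separable metric space M that contains an isometric copy of every countable complete metric space contains an isometric copy of every separable metric space. -/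
open Set Topology TopologicalSpace MeasureTheory

/-
Fix dense sequences `y` in `Y` and `Q` in `M`. It suffices to find `c : ℕ → M` with
`dist (c p) (c q) = dist (y p) (y q)`; such a `c` is the limit of a chain, i.e. of maps
`z i : ℕ → M` with `dist (z i p) (z (i + 1) q) = dist (y p) (y q) + 2⁻ⁱ`.
Finite chains, recorded through `Q`-approximations of increasing precision, form a tree on `ℕ`
whose infinite branches yield chains, by completeness of `M`. If this tree had no infinite branch,
the pairs (node `s`, index `p`), at distance `dist (y p) (y q)` plus the `2^(-n)`-ultrametric of
the words `s ++ [p]`, would form a countable complete metric space. In it the points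
`(s.take i, p)` of any node `s` form a chain of length `|s| + 1`, so an isometric copy in `M`
turns every node into a strictly longer one, monotonically in `s`; iterating from the root gives
an infinite branch after all.
-/

open Descriptive Filter

theorem PiNat.firstDiff_eq {E : ℕ → Type*} {x y : ∀ n, E n} {n : ℕ}
    (hlt : ∀ k < n, x k = y k) (hn : x n ≠ y n) : PiNat.firstDiff x y = n := by
  have hne : x ≠ y := fun h => hn (congrFun h n)
  refine le_antisymm (not_lt.1 fun h => hn (PiNat.apply_eq_of_lt_firstDiff h)) ?_
  exact (PiNat.mem_cylinder_iff_le_firstDiff hne n).1 hlt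

theorem List.eq_of_getElem?_map_inl_append {α ι : Type*} {s t : List α} {i j : ι}
    (h : ∀ n ≤ s.length, (s.map Sum.inl ++ [Sum.inr i])[n]? =
      (t.map Sum.inl ++ [(Sum.inr j : α ⊕ ι)])[n]?) : s = t ∧ i = j := by
  induction s generalizing t with
  | nil => cases t <;> simpa using h 0 le_rfl
  | cons a s ih =>
    cases t with
    | nil => simpa using h 0 (by simp)
    | cons b t =>
      have hab : a = b := by simpa using h 0 (by simp)
      have hst := ih (t := t) fun n hn => by simpa using h (n + 1) (by simpa using hn)
      exact ⟨by rw [hab, hst.1], hst.2⟩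

namespace Descriptive.Tree

variable {α : Type*}

def body (T : tree α) : Set (ℕ → α) := {b | ∀ n, List.ofFn (fun k : Fin n => b k) ∈ T}

theorem body_nonempty_of_extend {T : tree α} (hT : [] ∈ T) (f : T → T)
    (hlen : ∀ s, (f s).1.length = s.1.length + 1)
    (hmono : ∀ s t : T, s.1 <+: t.1 → (f s).1 <+: (f t).1) :
    (body T).Nonempty := by
  let τ : ℕ → T := fun n => f^[n] ⟨[], hT⟩
  have hτ : ∀ n, τ (n + 1) = f (τ n) := fun n => Function.iterate_succ_apply' _ _ _
  have hτlen : ∀ n, (τ n).1.length = n := by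
    intro n
    induction n with
    | zero => rfl
    | succ n ih => rw [hτ, hlen, ih]
  have hτsucc : ∀ n, (τ n).1 <+: (τ (n + 1)).1 := by
    intro n
    induction n with
    | zero => exact List.nil_prefix
    | succ n ih => rw [hτ, hτ (n + 1)]; exact hmono _ _ ih
  have hτmono : ∀ {m n}, m ≤ n → (τ m).1 <+: (τ n).1 := by
    intro m n hmn
    induction n, hmn using Nat.le_induction with
    | base => exact List.prefix_refl _
    | succ n _ ih => exact ih.trans (hτsucc n)
  refine ⟨fun k => (τ (k + 1)).1[k]'(by rw [hτlen]; omega), fun n => ?_⟩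
  convert (τ n).2
  refine List.ext_getElem (by simp [hτlen]) fun k hk _ => ?_
  rw [List.getElem_ofFn]
  exact (hτmono (by simpa using hk)).getElem _

end Descriptive.Tree

/-- `y` is a parameter only for the sake of the metric instance below. -/
@[ext]
structure TreeSpace {α ι Y : Type*} (T : tree α) (y : ι → Y) where
  node : T
  index : ι

namespace TreeSpace

variable {α ι Y : Type*} {T : tree α} {y : ι → Y}

def word (a : TreeSpace T y) : List (α ⊕ ι) := a.node.1.map Sum.inl ++ [Sum.inr a.index]

theorem word_getElem?_of_lt (a : TreeSpace T y) {n : ℕ} (hn : n < a.node.1.length) :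
    a.word[n]? = some (Sum.inl a.node.1[n]) := by
  simp [word, List.getElem?_append_left, hn]

theorem word_getElem?_length (a : TreeSpace T y) :
    a.word[a.node.1.length]? = some (Sum.inr a.index) := by
  simp [word]

theorem eq_of_word_agree {a b : TreeSpace T y}
    (h : ∀ n ≤ a.node.1.length, a.word[n]? = b.word[n]?) : a = b := by
  obtain ⟨hnode, hindex⟩ := List.eq_of_getElem?_map_inl_append h
  exact TreeSpace.ext (Subtype.ext hnode) hindex

def seq (a : TreeSpace T y) : ℕ → Option (α ⊕ ι) := fun n => a.word[n]?

variable [PseudoMetricSpace Y]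

attribute [local instance] PiNat.dist

noncomputable instance : MetricSpace (TreeSpace T y) where
  dist a b := dist (y a.index) (y b.index) + dist a.seq b.seq
  dist_self a := by rw [dist_self, PiNat.dist_self, add_zero]
  dist_comm a b := by rw [dist_comm (y a.index), PiNat.dist_comm]
  dist_triangle a b c := by
    linarith [dist_triangle (y a.index) (y b.index) (y c.index),
      PiNat.dist_triangle a.seq b.seq c.seq]
  eq_of_dist_eq_zero {a b} h := by
    have hw := PiNat.eq_of_dist_eq_zero a.seq b.seq <|
      le_antisymm (by linarith [dist_nonneg (x := y a.index) (y := y b.index)])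
        (PiNat.dist_nonneg _ _)
    exact eq_of_word_agree fun n _ => congrFun hw n

theorem dist_eq (a b : TreeSpace T y) :
    dist a b = dist (y a.index) (y b.index) + dist a.seq b.seq := rfl

instance [Countable α] [Countable ι] : Countable (TreeSpace T y) :=
  Function.Injective.countable (f := fun a : TreeSpace T y => (a.node, a.index))
    fun _ _ h => TreeSpace.ext (Prod.ext_iff.1 h).1 (Prod.ext_iff.1 h).2

theorem dist_take_take (s : T) {i : ℕ} (hi : i < s.1.length) (p q : ι) :
    dist (⟨Tree.take i s, p⟩ : TreeSpace T y) ⟨Tree.take (i + 1) s, q⟩ =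
      dist (y p) (y q) + (1 / 2) ^ i := by
  set a : TreeSpace T y := ⟨Tree.take i s, p⟩
  set b : TreeSpace T y := ⟨Tree.take (i + 1) s, q⟩
  have ha : a.node.1.length = i := by simp [a, hi.le]
  have hb : i < b.node.1.length := by simp [b, hi]
  have hdiff : a.seq i ≠ b.seq i := by
    have hai : a.word[i]? = some (Sum.inr p) := ha ▸ word_getElem?_length a
    simp [seq, hai, word_getElem?_of_lt b hb]
  rw [dist_eq, PiNat.dist_eq_of_ne fun h => hdiff (congrFun h i), PiNat.firstDiff_eq _ hdiff]
  intro k hk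
  simp only [seq]
  rw [word_getElem?_of_lt a (by omega), word_getElem?_of_lt b (by omega)]
  simp [a, b]

theorem completeSpace_of_body_eq_empty (hT : Tree.body T = ∅) :
    CompleteSpace (TreeSpace T y) := by
  refine Metric.complete_of_convergent_controlled_sequences (fun k => (1 / 2) ^ k)
    (fun k => by positivity) fun u hu => ?_
  have hagree : ∀ k n, k ≤ n → ∀ j ≤ k, (u n).word[j]? = (u k).word[j]? := by
    intro k n hkn j hj
    have hseq : dist (u n).seq (u k).seq < (1 / 2) ^ k :=
      (le_add_of_nonneg_left dist_nonneg).trans_lt (hu k n k hkn le_rfl)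
    exact PiNat.apply_eq_of_dist_lt hseq hj
  -- either the end marker of some `u k` lies within the first `k + 1` letters, and then `u` is
  -- eventually constant, or the nodes of `u` converge to an infinite branch
  by_cases hshort : ∃ k, (u k).node.1.length ≤ k
  · obtain ⟨k, hk⟩ := hshort
    refine ⟨u k, tendsto_atTop_of_eventually_const (i₀ := k) fun n hn => ?_⟩
    exact (eq_of_word_agree fun j hj => (hagree k n hn j (hj.trans hk)).symm).symm
  · push Not at hshort
    suffices hb : (fun k => (u k).node.1[k]'(hshort k)) ∈ Tree.body T from (hT.subset hb).elim
    intro n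
    convert (Tree.take n (u n).node).2
    refine List.ext_getElem (by simp [(hshort n).le]) fun k hk _ => ?_
    have hkn : k < n := by simpa using hk
    have h := hagree k n hkn.le k le_rfl
    rw [word_getElem?_of_lt _ (hkn.trans (hshort n)), word_getElem?_of_lt _ (hshort k)] at h
    simpa [List.getElem_ofFn] using h.symm

end TreeSpace

theorem exists_dist_eq_of_chain {ι Y M : Type*} [PseudoMetricSpace Y] [MetricSpace M]
    [CompleteSpace M] {y : ι → Y} {z : ℕ → ι → M}
    (hz : ∀ i p q, dist (z i p) (z (i + 1) q) = dist (y p) (y q) + (1 / 2) ^ i) :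
    ∃ c : ι → M, ∀ p q, dist (c p) (c q) = dist (y p) (y q) := by
  have hcauchy (p : ι) : CauchySeq fun i => z i p :=
    cauchySeq_of_le_geometric (1 / 2) 1 (by norm_num) fun i => by
      rw [hz, dist_self, zero_add, one_mul]
  choose c hc using fun p => cauchySeq_tendsto_of_complete (hcauchy p)
  refine ⟨c, fun p q =>
    tendsto_nhds_unique ((hc p).dist ((hc q).comp (tendsto_add_atTop_nat 1))) ?_⟩
  simp only [Function.comp_def, hz]
  simpa using tendsto_const_nhds.add
    (tendsto_pow_atTop_nhds_zero_of_lt_one (by norm_num : (0 : ℝ) ≤ 1 / 2) (by norm_num))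

theorem exists_isometry_of_denseRange {ι Y M : Type*} [PseudoMetricSpace Y] [MetricSpace M]
    [CompleteSpace M] {y : ι → Y} (hy : DenseRange y) {c : ι → M}
    (hc : ∀ p q, dist (c p) (c q) = dist (y p) (y q)) : ∃ j : Y → M, Isometry j := by
  let f : range y → M := c ∘ rangeSplitting y
  have hf : Isometry f := Isometry.of_dist_eq fun a b => by
    simp only [f, Function.comp_apply, hc, apply_rangeSplitting, Subtype.dist_eq]
  have hval : IsUniformInducing ((↑) : range y → Y) :=
    isUniformEmbedding_subtype_val.isUniformInducing
  have hdense : DenseRange ((↑) : range y → Y) := Dense.denseRange_val hy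
  refine ⟨(hval.isDenseInducing hdense).extend f, Isometry.of_dist_eq ?_⟩
  have hcont := (uniformContinuous_uniformly_extend hval hdense hf.uniformContinuous).continuous
  have hclosed := isClosed_eq ((hcont.comp continuous_fst).dist (hcont.comp continuous_snd))
    continuous_dist
  refine hdense.induction_on₂ hclosed fun a b => ?_
  simp only [uniformly_extend_of_ind hval hdense hf.uniformContinuous, hf.dist_eq,
    Subtype.dist_eq]

/-- In `ApproximatesChain Q y s x`, the entry `s[k]` codes a point within `2⁻ᵏ` of `x i m`, where
`(i, m) = approxSlot k`; every pair `(i, m)` occurs at infinitely many positions `k`. -/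
def approxSlot (k : ℕ) : ℕ × ℕ := Nat.unpair (Nat.unpair k).1

theorem approxSlot_fst_le (k : ℕ) : (approxSlot k).1 ≤ k :=
  (Nat.unpair_left_le _).trans (Nat.unpair_left_le k)

theorem approxSlot_pair (i m r : ℕ) : approxSlot (Nat.pair (Nat.pair i m) r) = (i, m) := by
  simp [approxSlot]

section Approx

variable {Y M : Type*} [PseudoMetricSpace Y] [MetricSpace M] {Q : ℕ → M} {y : ℕ → Y}

def ApproximatesChain (Q : ℕ → M) (y : ℕ → Y) (s : List ℕ) (x : ℕ → ℕ → M) : Prop :=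
  (∀ i, i + 1 < s.length → ∀ p q,
    dist (x i p) (x (i + 1) q) = dist (y p) (y q) + (1 / 2) ^ i) ∧
  ∀ k (hk : k < s.length),
    dist (Q s[k]) (x (approxSlot k).1 (approxSlot k).2) ≤ (1 / 2) ^ k

def approxTree (Q : ℕ → M) (y : ℕ → Y) : tree ℕ :=
  ⟨{s | ∃ x, ApproximatesChain Q y s x},
    fun s a ⟨x, hchain, happrox⟩ => ⟨x, fun i hi => hchain i (by simp; omega),
      fun k hk => by
        have h := happrox k (by simp; omega)
        rwa [List.getElem_append_left hk] at h⟩⟩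

theorem mem_approxTree {s : List ℕ} : s ∈ approxTree Q y ↔ ∃ x, ApproximatesChain Q y s x :=
  by rfl

theorem nil_mem_approxTree : [] ∈ approxTree Q y :=
  mem_approxTree.2 ⟨fun _ _ => Q 0, by simp, by simp⟩

theorem exists_chain_of_mem_body [CompleteSpace M] {b : ℕ → ℕ}
    (hb : b ∈ Tree.body (approxTree Q y)) : ∃ z : ℕ → ℕ → M,
      ∀ i p q, dist (z i p) (z (i + 1) q) = dist (y p) (y q) + (1 / 2) ^ i := by
  choose x hchain happrox using fun n => mem_approxTree.1 (hb n)
  have hclose : ∀ n k, k < n →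
      dist (Q (b k)) (x n (approxSlot k).1 (approxSlot k).2) ≤ (1 / 2) ^ k := fun n k hk => by
    have h := happrox n k (by simpa using hk)
    rwa [List.getElem_ofFn] at h
  have hcauchy : ∀ i m, CauchySeq fun n => x n i m := by
    intro i m
    rw [Metric.cauchySeq_iff']
    intro ε hε
    obtain ⟨r, hr⟩ := exists_pow_lt_of_lt_one (half_pos hε) one_half_lt_one
    set k := Nat.pair (Nat.pair i m) r
    have hkr : (1 / 2 : ℝ) ^ k ≤ (1 / 2) ^ r :=
      pow_le_pow_of_le_one (by norm_num) (by norm_num) (Nat.right_le_pair _ _)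
    refine ⟨k + 1, fun n hn => ?_⟩
    have h1 := hclose n k (by omega)
    have h2 := hclose (k + 1) k (by omega)
    rw [approxSlot_pair] at h1 h2
    calc dist (x n i m) (x (k + 1) i m)
        ≤ dist (Q (b k)) (x n i m) + dist (Q (b k)) (x (k + 1) i m) := dist_triangle_left _ _ _
      _ < ε := by linarith
  choose z hz using fun i m => cauchySeq_tendsto_of_complete (hcauchy i m)
  refine ⟨z, fun i p q => tendsto_nhds_unique ((hz i p).dist (hz (i + 1) q)) ?_⟩
  exact tendsto_atTop_of_eventually_const (i₀ := i + 2) fun n hn =>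
    hchain n i (by simp; omega) p q

theorem body_approxTree_nonempty (hQ : DenseRange Q) {J : TreeSpace (approxTree Q y) y → M}
    (hJ : Isometry J) : (Tree.body (approxTree Q y)).Nonempty := by
  have happrox (v : M) (k : ℕ) : ∃ a, dist (Q a) v ≤ (1 / 2) ^ k := by
    obtain ⟨a, ha⟩ := Metric.denseRange_iff.1 hQ v _ (by positivity : (0 : ℝ) < (1 / 2) ^ k)
    exact ⟨a, (dist_comm _ _).trans_le ha.le⟩
  choose apx hapx using happrox
  let level (s : approxTree Q y) (i m : ℕ) : M := J ⟨Tree.take i s, m⟩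
  let f (s : approxTree Q y) : approxTree Q y :=
    ⟨List.ofFn fun k : Fin (s.1.length + 1) => apx (level s (approxSlot k).1 (approxSlot k).2) k,
      mem_approxTree.2 ⟨level s, fun i hi p q =>
        (hJ.dist_eq _ _).trans (TreeSpace.dist_take_take s (by simpa using hi) p q),
        fun k _ => by rw [List.getElem_ofFn]; exact hapx _ _⟩⟩
  refine Tree.body_nonempty_of_extend nil_mem_approxTree f (fun s => by simp [f])
    fun s t hst => ?_
  refine List.prefix_iff_getElem.2 ⟨by simp [f, hst.length_le], fun k hk => ?_⟩
  have hks : (approxSlot k).1 ≤ s.1.length :=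
    (approxSlot_fst_le k).trans (by simpa [f] using hk)
  have htake : Tree.take (approxSlot k).1 s = Tree.take (approxSlot k).1 t :=
    Subtype.ext <| (hst.take _).eq_of_length (by simp; have := hst.length_le; omega)
  simp only [f, List.getElem_ofFn, level, htake]

end Approx

theorem exists_dist_eq_of_forall_countable_completeSpace {Y M : Type*} [PseudoMetricSpace Y]
    [MetricSpace M] [CompleteSpace M] {Q : ℕ → M} (hQ : DenseRange Q) (y : ℕ → Y)
    (h : ∀ (X : Type) [MetricSpace X] [Countable X] [CompleteSpace X],
      ∃ j : X → M, Isometry j) :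
    ∃ c : ℕ → M, ∀ p q, dist (c p) (c q) = dist (y p) (y q) := by
  obtain ⟨b, hb⟩ : (Tree.body (approxTree Q y)).Nonempty := by
    by_contra hempty
    have := TreeSpace.completeSpace_of_body_eq_empty (y := y)
      (Set.not_nonempty_iff_eq_empty.1 hempty)
    obtain ⟨J, hJ⟩ := h (TreeSpace (approxTree Q y) y)
    exact hempty (body_approxTree_nonempty hQ hJ)
  obtain ⟨z, hz⟩ := exists_chain_of_mem_body hb
  exact exists_dist_eq_of_chain hz

theorem isometrically_universal_of_universal_for_countable_complete
    (M : Type) [MetricSpace M] [CompleteSpace M] [SeparableSpace M]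
    (h : ∀ (X : Type) [MetricSpace X] [Countable X] [CompleteSpace X],
      ∃ j : X → M, Isometry j) :
    ∀ (Y : Type) [MetricSpace Y] [SeparableSpace Y], ∃ j : Y → M, Isometry j := by
  intro Y _ _
  rcases isEmpty_or_nonempty Y with _ | _
  · exact ⟨isEmptyElim, isometry_subsingleton⟩
  obtain ⟨j₀, -⟩ := h Unit
  have : Nonempty M := ⟨j₀ ()⟩
  obtain ⟨c, hc⟩ :=
    exists_dist_eq_of_forall_countable_completeSpace (denseRange_denseSeq M) (denseSeq Y) h
  exact exists_isometry_of_denseRange (denseRange_denseSeq Y) hc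
end
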